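/- arXiv:2504.16486 — 5 statements merged into one kernel-verified Lean document; each statement's English description precedes it below -/
import Mathlib

section
/- Let μ > 0 and let u be a μ-homogeneous solution of the thin obstacle problem in ℝ³ whose gradient extends continuously from {z > 0} to {z ≥ 0} \ {0}. Let p be a Legendre function for the pair (3, μ). Then p'(0) · ∫₀^{2π} u(cos θ, sin θ, 0) dθ = p(0) · ∫₀^{2π} ∂_z⁺u(cos θ, sin θ, 0) dθ. -/
open Real Set Filter

/-- Partial derivative of `f : ℝⁿ → ℝ` in the `i`-th coordinate direction. -/
noncomputable def pd {n : ℕ} (i : Fin n) (f : (Fin n → ℝ) → ℝ) (x : Fin n → ℝ) : ℝ :=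
  fderiv ℝ f x (Pi.single i 1)

/-- The Laplacian of `f : ℝⁿ → ℝ`. -/
noncomputable def lap {n : ℕ} (f : (Fin n → ℝ) → ℝ) (x : Fin n → ℝ) : ℝ :=
  ∑ i, pd i (pd i f) x

/-- The contact set `Z(u) = {xᵢ = 0} ∩ {u = 0}`, `i` being the distinguished coordinate. -/
def contactSet {n : ℕ} (u : (Fin n → ℝ) → ℝ) (i : Fin n) : Set (Fin n → ℝ) :=
  {x | x i = 0 ∧ u x = 0}

/-- `d` is the one-sided derivative `∂ᵢ⁺u(x) = lim_{t→0⁺} (u(x+t eᵢ) - u(x))/t`. -/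
def HasUpperDeriv {n : ℕ} (u : (Fin n → ℝ) → ℝ) (i : Fin n) (x : Fin n → ℝ) (d : ℝ) : Prop :=
  Filter.Tendsto (fun t : ℝ => (u (x + t • (Pi.single i 1 : Fin n → ℝ)) - u x) / t)
    (nhdsWithin 0 (Set.Ioi 0)) (nhds d)

/-- `u` is a `μ`-homogeneous solution of the thin obstacle problem in `ℝⁿ`,
with thin space `{xᵢ = 0}`. -/
structure IsTOPSol {n : ℕ} (μ : ℝ) (u : (Fin n → ℝ) → ℝ) (i : Fin n) : Prop where
  cont : Continuous u
  symm : ∀ x, u (Function.update x i (-(x i))) = u x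
  homog : ∀ r : ℝ, 0 < r → ∀ x, u (r • x) = r ^ μ * u x
  smooth : ContDiffOn ℝ 2 u (contactSet u i)ᶜ
  harm : ∀ x ∈ (contactSet u i)ᶜ, lap u x = 0
  nonneg : ∀ x, x i = 0 → 0 ≤ u x
  upper : ∀ x, x i = 0 → ∃ d, d ≤ 0 ∧ HasUpperDeriv u i x d


/-- `p` is a Legendre function for the pair `(n, μ)`, with derivative `p'` (denoted `p₁`):
`p` is `C¹` on `[0, π/2]`, `C²` on `[0, π/2)`, solves
`p'' - (n-2)·tan(φ)·p' + μ(μ+n-2)·p = 0` on `[0, π/2)`, and `p(π/2) = 1`, `p'(π/2) = 0`. -/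
def IsLegendre (n : ℕ) (μ : ℝ) (p p₁ : ℝ → ℝ) : Prop :=
  (∀ φ ∈ Set.Icc (0 : ℝ) (π / 2), HasDerivWithinAt p (p₁ φ) (Set.Icc 0 (π / 2)) φ) ∧
  ContinuousOn p₁ (Set.Icc 0 (π / 2)) ∧
  (∃ p₂ : ℝ → ℝ,
    (∀ φ ∈ Set.Ico (0 : ℝ) (π / 2), HasDerivWithinAt p₁ (p₂ φ) (Set.Ico 0 (π / 2)) φ) ∧
    ContinuousOn p₂ (Set.Ico 0 (π / 2)) ∧
    ∀ φ ∈ Set.Ico (0 : ℝ) (π / 2),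
      p₂ φ - (n - 2 : ℝ) * Real.tan φ * p₁ φ + μ * (μ + n - 2) * p φ = 0) ∧
  p (π / 2) = 1 ∧ p₁ (π / 2) = 0


open MeasureTheory intervalIntegral

lemma clm_apply_eq_sum (L : (Fin 3 → ℝ) →L[ℝ] ℝ) (v : Fin 3 → ℝ) :
    L v = ∑ i, v i * L (Pi.single i 1) := by
  conv_lhs => rw [← Finset.univ_sum_single v, map_sum]
  refine Finset.sum_congr rfl fun i _ => ?_
  have h1 : Pi.single i (v i) = v i • (Pi.single i 1 : Fin 3 → ℝ) := by
    funext j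
    by_cases h : j = i <;> simp [Pi.single_apply, h]
  rw [h1, L.map_smul, smul_eq_mul]

lemma hasDerivAt_comp_pd {f : (Fin 3 → ℝ) → ℝ} {x : Fin 3 → ℝ}
    (hf : DifferentiableAt ℝ f x) {c : ℝ → Fin 3 → ℝ} {c' : Fin 3 → ℝ} {t : ℝ}
    (hc : HasDerivAt c c' t) (hx : c t = x) :
    HasDerivAt (fun s => f (c s)) (∑ i, c' i * pd i f x) t := by
  have hf' : HasFDerivAt f (fderiv ℝ f x) (c t) := hx ▸ hf.hasFDerivAt
  have := hf'.comp_hasDerivAt t hc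
  rw [clm_apply_eq_sum] at this
  exact this

noncomputable def Xs (θ φ : ℝ) : Fin 3 → ℝ := ![cos θ * cos φ, sin θ * cos φ, sin φ]
noncomputable def Xsφ (θ φ : ℝ) : Fin 3 → ℝ := ![-(cos θ * sin φ), -(sin θ * sin φ), cos φ]
noncomputable def Xsθ (θ φ : ℝ) : Fin 3 → ℝ := ![-(sin θ * cos φ), cos θ * cos φ, 0]
noncomputable def Xsθθ (θ φ : ℝ) : Fin 3 → ℝ := ![-(cos θ * cos φ), -(sin θ * cos φ), 0]

lemma hasDerivAt_Xs_phi (θ φ : ℝ) : HasDerivAt (fun φ => Xs θ φ) (Xsφ θ φ) φ := by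
  rw [hasDerivAt_pi]
  intro i
  fin_cases i <;> simp only [Xs, Xsφ, Matrix.cons_val_zero, Matrix.cons_val_one,
    Matrix.head_cons, Matrix.cons_val_two, Matrix.tail_cons, Fin.isValue]
  · simpa using ((Real.hasDerivAt_cos φ).const_mul (cos θ))
  · simpa using ((Real.hasDerivAt_cos φ).const_mul (sin θ))
  · exact Real.hasDerivAt_sin φ

lemma hasDerivAt_Xs_theta (θ φ : ℝ) : HasDerivAt (fun θ => Xs θ φ) (Xsθ θ φ) θ := by
  rw [hasDerivAt_pi]
  intro i
  fin_cases i <;> simp only [Xs, Xsθ, Matrix.cons_val_zero, Matrix.cons_val_one,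
    Matrix.head_cons, Matrix.cons_val_two, Matrix.tail_cons, Fin.isValue]
  · simpa [mul_comm] using ((Real.hasDerivAt_cos θ).mul_const (cos φ))
  · simpa using ((Real.hasDerivAt_sin θ).mul_const (cos φ))
  · exact hasDerivAt_const θ _

lemma hasDerivAt_Xsphi_phi (θ φ : ℝ) : HasDerivAt (fun φ => Xsφ θ φ) (-(Xs θ φ)) φ := by
  rw [hasDerivAt_pi]
  intro i
  fin_cases i <;> simp only [Xs, Xsφ, Pi.neg_apply, Matrix.cons_val_zero, Matrix.cons_val_one,
    Matrix.head_cons, Matrix.cons_val_two, Matrix.tail_cons, Fin.isValue]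
  · simpa [mul_comm] using (((Real.hasDerivAt_sin φ).const_mul (cos θ)).fun_neg)
  · simpa using (((Real.hasDerivAt_sin φ).const_mul (sin θ)).fun_neg)
  · simpa using Real.hasDerivAt_cos φ

lemma hasDerivAt_Xstheta_theta (θ φ : ℝ) : HasDerivAt (fun θ => Xsθ θ φ) (Xsθθ θ φ) θ := by
  rw [hasDerivAt_pi]
  intro i
  fin_cases i <;> simp only [Xsθ, Xsθθ, Matrix.cons_val_zero, Matrix.cons_val_one,
    Matrix.head_cons, Matrix.cons_val_two, Matrix.tail_cons, Fin.isValue]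
  · simpa using (((Real.hasDerivAt_sin θ).mul_const (cos φ)).fun_neg)
  · simpa using ((Real.hasDerivAt_cos θ).mul_const (cos φ))
  · exact hasDerivAt_const θ _

lemma continuous_Xs : Continuous (fun q : ℝ × ℝ => Xs q.1 q.2) := by
  refine continuous_pi fun i => ?_
  fin_cases i
  · exact (by fun_prop : Continuous fun q : ℝ × ℝ => cos q.1 * cos q.2)
  · exact (by fun_prop : Continuous fun q : ℝ × ℝ => sin q.1 * cos q.2)
  · exact (by fun_prop : Continuous fun q : ℝ × ℝ => sin q.2)

lemma continuous_Xsphi : Continuous (fun q : ℝ × ℝ => Xsφ q.1 q.2) := by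
  refine continuous_pi fun i => ?_
  fin_cases i
  · exact (by fun_prop : Continuous fun q : ℝ × ℝ => -(cos q.1 * sin q.2))
  · exact (by fun_prop : Continuous fun q : ℝ × ℝ => -(sin q.1 * sin q.2))
  · exact (by fun_prop : Continuous fun q : ℝ × ℝ => cos q.2)

lemma euler_identity {f : (Fin 3 → ℝ) → ℝ} {x : Fin 3 → ℝ} {ν : ℝ}
    (hf : DifferentiableAt ℝ f x)
    (hhom : ∀ r : ℝ, 0 < r → f (r • x) = r ^ ν * f x) :
    ∑ i, x i * pd i f x = ν * f x := by
  have hc : HasDerivAt (fun r : ℝ => r • x) x 1 := by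
    simpa using (hasDerivAt_id (1:ℝ)).smul_const x
  have h1 : HasDerivAt (fun r : ℝ => f (r • x)) (∑ i, x i * pd i f x) 1 :=
    hasDerivAt_comp_pd hf hc (one_smul ℝ x)
  have h2 : HasDerivAt (fun r : ℝ => r ^ ν * f x) (ν * f x) 1 := by
    simpa using (Real.hasDerivAt_rpow_const (x := (1:ℝ)) (p := ν)
      (Or.inl one_ne_zero)).mul_const (f x)
  have heq : (fun r : ℝ => f (r • x)) =ᶠ[nhds (1:ℝ)] fun r => r ^ ν * f x := by
    filter_upwards [Ioi_mem_nhds (zero_lt_one)] with r hr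
    exact hhom r hr
  exact (h1.congr_of_eventuallyEq heq.symm).unique h2

lemma pd_homog {u : (Fin 3 → ℝ) → ℝ} {μ : ℝ} (hhom : ∀ r : ℝ, 0 < r → ∀ x, u (r • x) = r ^ μ * u x)
    {x : Fin 3 → ℝ} {r : ℝ} (hr : 0 < r)
    (hx : DifferentiableAt ℝ u x) (hrx : DifferentiableAt ℝ u (r • x)) (j : Fin 3) :
    pd j u (r • x) = r ^ (μ - 1) * pd j u x := by
  have hm : HasFDerivAt (fun y : Fin 3 → ℝ => r • y)
      (r • ContinuousLinearMap.id ℝ (Fin 3 → ℝ)) x := by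
    exact (r • ContinuousLinearMap.id ℝ (Fin 3 → ℝ)).hasFDerivAt
  have hL : HasFDerivAt (fun y => u (r • y))
      ((fderiv ℝ u (r • x)).comp (r • ContinuousLinearMap.id ℝ (Fin 3 → ℝ))) x :=
    HasFDerivAt.comp x hrx.hasFDerivAt hm
  have hR : HasFDerivAt (fun y => r ^ μ * u y) ((r ^ μ) • fderiv ℝ u x) x :=
    hx.hasFDerivAt.const_mul (r ^ μ)
  have hfun : (fun y => u (r • y)) = fun y => r ^ μ * u y := funext fun y => hhom r hr y
  have := hL.unique (hfun ▸ hR)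
  have happ := congrArg (fun L => L (Pi.single j 1)) this
  simp only [ContinuousLinearMap.coe_comp', Function.comp_apply,
    ContinuousLinearMap.coe_smul', Pi.smul_apply, ContinuousLinearMap.smul_apply,
    ContinuousLinearMap.coe_id', id_eq, smul_eq_mul] at happ
  -- happ : fderiv u (r•x) (r • single) = r^μ * fderiv u x single
  have hrne : r ≠ 0 := ne_of_gt hr
  have key : r * pd j u (r • x) = r ^ μ * pd j u x := by
    unfold pd
    rw [← happ, (fderiv ℝ u (r • x)).map_smul, smul_eq_mul]
  have hpow : r * r ^ (μ - 1) = r ^ μ := by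
    rw [Real.rpow_sub hr, Real.rpow_one]
    field_simp
  have hgoal : r * pd j u (r • x) = r * (r ^ (μ - 1) * pd j u x) := by
    rw [key, ← hpow]; ring
  exact mul_left_cancel₀ hrne hgoal

lemma key_algebra (cθ sθ cφ sφ μ v g0 g1 g2 H00 H01 H02 H10 H11 H12 H20 H21 H22 P P1 P2 : ℝ)
    (hθ : sθ^2 + cθ^2 = 1) (hφ : sφ^2 + cφ^2 = 1)
    (hharm : H00 + H11 + H22 = 0)
    (hE1 : cθ*cφ*g0 + sθ*cφ*g1 + sφ*g2 = μ*v)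
    (hE20 : cθ*cφ*H00 + sθ*cφ*H10 + sφ*H20 = (μ-1)*g0)
    (hE21 : cθ*cφ*H01 + sθ*cφ*H11 + sφ*H21 = (μ-1)*g1)
    (hE22 : cθ*cφ*H02 + sθ*cφ*H12 + sφ*H22 = (μ-1)*g2)
    (hODE : cφ*P2 - sφ*P1 + μ*(μ+1)*P*cφ = 0) :
    (-sφ * (P * (g0 * (-(cθ*sφ)) + g1 * (-(sθ*sφ)) + g2 * cφ) - P1 * v)
      + cφ * ((P1 * (g0 * (-(cθ*sφ)) + g1 * (-(sθ*sφ)) + g2 * cφ)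
          + P * (((-(cθ*sφ))*H00 + (-(sθ*sφ))*H10 + cφ*H20) * (-(cθ*sφ))
                + ((-(cθ*sφ))*H01 + (-(sθ*sφ))*H11 + cφ*H21) * (-(sθ*sφ))
                + ((-(cθ*sφ))*H02 + (-(sθ*sφ))*H12 + cφ*H22) * cφ
                + (g0 * (-(cθ*cφ)) + g1 * (-(sθ*cφ)) + g2 * (-sφ))))
        - (P2 * v + P1 * (g0 * (-(cθ*sφ)) + g1 * (-(sθ*sφ)) + g2 * cφ)))) * cφ
    = -(P * (((-(sθ*cφ))*H00 + (cθ*cφ)*H10) * (-(sθ*cφ))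
            + ((-(sθ*cφ))*H01 + (cθ*cφ)*H11) * (cθ*cφ)
            + (g0 * (-(cθ*cφ)) + g1 * (-(sθ*cφ))))) := by
  linear_combination (-(v*cφ))*hODE + (P*cφ*(g0*cθ+g1*sθ))*hφ - (2*P*cφ^2)*hE1
    + (P*cφ^2)*hharm - (P*cφ^3*cθ)*hE20 - (P*cφ^3*sθ)*hE21 - (P*cφ^2*sφ)*hE22
    - (P*cφ^2*(μ-1))*hE1
    + (P*cφ^2*H00 + P*cφ^2*sφ^2*H11 + P*cφ^4*H11)*hθ
    + (P*cφ^2*(H22 + H11 + cθ*sθ*H10 + cθ*sθ*H01 - cθ^2*H11 + cθ^2*H00))*hφ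

def sreg : Set (Fin 3 → ℝ) := {x | x 2 ≠ 0}

lemma sreg_open : IsOpen sreg :=
  (isClosed_eq (continuous_apply 2) continuous_const).isOpen_compl

lemma diff_of {u : (Fin 3 → ℝ) → ℝ} (hsm : ContDiffOn ℝ 2 u sreg) {x : Fin 3 → ℝ}
    (hx : x ∈ sreg) : DifferentiableAt ℝ u x :=
  ((hsm.contDiffAt (sreg_open.mem_nhds hx)).differentiableAt (by norm_num))

lemma contDiffOn_pd {u : (Fin 3 → ℝ) → ℝ} (hsm : ContDiffOn ℝ 2 u sreg) (j : Fin 3) :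
    ContDiffOn ℝ 1 (pd j u) sreg := by
  have h1 : ContDiffOn ℝ 1 (fun x => fderiv ℝ u x) sreg :=
    hsm.fderiv_of_isOpen sreg_open (by norm_num)
  exact h1.clm_apply contDiffOn_const

lemma diff_pd {u : (Fin 3 → ℝ) → ℝ} (hsm : ContDiffOn ℝ 2 u sreg) (j : Fin 3) {x : Fin 3 → ℝ}
    (hx : x ∈ sreg) : DifferentiableAt ℝ (pd j u) x :=
  (((contDiffOn_pd hsm j).contDiffAt (sreg_open.mem_nhds hx)).differentiableAt (by norm_num))

lemma cont_pd {u : (Fin 3 → ℝ) → ℝ} (hsm : ContDiffOn ℝ 2 u sreg) (j : Fin 3) :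
    ContinuousOn (pd j u) sreg := (contDiffOn_pd hsm j).continuousOn

lemma cont_pd2 {u : (Fin 3 → ℝ) → ℝ} (hsm : ContDiffOn ℝ 2 u sreg) (i j : Fin 3) :
    ContinuousOn (pd i (pd j u)) sreg := by
  have h1 : ContinuousOn (fun x => fderiv ℝ (pd j u) x) sreg :=
    (contDiffOn_pd hsm j).continuousOn_fderiv_of_isOpen sreg_open (by norm_num)
  exact (ContinuousLinearMap.apply ℝ ℝ (Pi.single i 1)).continuous.comp_continuousOn h1

lemma upper_deriv_eq_G (u : (Fin 3 → ℝ) → ℝ) (hc : Continuous u)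
    (hdiff : ∀ x : Fin 3 → ℝ, x 2 ≠ 0 → DifferentiableAt ℝ u x)
    (G : (Fin 3 → ℝ) → Fin 3 → ℝ)
    (hGcont : ContinuousOn G ({x : Fin 3 → ℝ | 0 ≤ x 2} \ {0}))
    (hGgrad : ∀ x : Fin 3 → ℝ, 0 < x 2 → ∀ i : Fin 3, G x i = pd i u x)
    (θ : ℝ) {dv : ℝ} (hd : HasUpperDeriv u 2 ![Real.cos θ, Real.sin θ, 0] dv) :
    dv = G ![Real.cos θ, Real.sin θ, 0] 2 := by
  set x : Fin 3 → ℝ := ![Real.cos θ, Real.sin θ, 0] with hxdef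
  set e : Fin 3 → ℝ := (Pi.single (2 : Fin 3) (1:ℝ)) with hedef
  have he0 : e 0 = 0 := by simp [hedef, Pi.single_apply]
  have he1 : e 1 = 0 := by simp [hedef, Pi.single_apply]
  have he2 : e 2 = 1 := by simp [hedef]
  have hx0 : x 0 = Real.cos θ := rfl
  have hx1 : x 1 = Real.sin θ := rfl
  have hx2 : x 2 = 0 := rfl
  have hc2 : ∀ s : ℝ, (x + s • e) 2 = s := by
    intro s; simp [hx2, he2]
  have hney : ∀ s : ℝ, x + s • e ≠ 0 := by
    intro s h0
    have h1 : (x + s • e) 0 = 0 := by rw [h0]; rfl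
    have h2 : (x + s • e) 1 = 0 := by rw [h0]; rfl
    simp only [Pi.add_apply, Pi.smul_apply, he0, he1, hx0, hx1, smul_eq_mul,
      mul_zero, add_zero] at h1 h2
    nlinarith [Real.sin_sq_add_cos_sq θ]
  have hcurve_cont : Continuous (fun s : ℝ => x + s • e) := by fun_prop
  have hmemG : ∀ s : ℝ, 0 ≤ s → x + s • e ∈ {y : Fin 3 → ℝ | 0 ≤ y 2} \ {0} := by
    intro s hs
    exact ⟨by simpa [hc2 s] using hs, hney s⟩
  set f : ℝ → ℝ := fun s => G (x + s • e) 2 with hfdef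
  have hfc : ContinuousOn f (Ici 0) := by
    apply ContinuousOn.comp (t := {y : Fin 3 → ℝ | 0 ≤ y 2} \ {0})
      ((continuous_apply (2 : Fin 3)).comp_continuousOn hGcont) hcurve_cont.continuousOn
    intro s hs; exact hmemG s hs
  have hcurve : ∀ s : ℝ, HasDerivAt (fun s : ℝ => x + s • e) e s := by
    intro s
    simpa using ((hasDerivAt_id s).smul_const e).const_add x
  have hud : ∀ s : ℝ, 0 < s → HasDerivAt (fun s => u (x + s • e)) (f s) s := by
    intro s hs
    have hds : DifferentiableAt ℝ u (x + s • e) := hdiff _ (by rw [hc2]; exact ne_of_gt hs)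
    have := hasDerivAt_comp_pd hds (hcurve s) rfl
    have hval : (∑ i, e i * pd i u (x + s • e)) = f s := by
      rw [Fin.sum_univ_three, he0, he1, he2, hfdef]
      simp only [zero_mul, one_mul, zero_add]
      rw [hGgrad _ (by rw [hc2]; exact hs)]
    rwa [hval] at this
  have hFTC : ∀ t : ℝ, 0 < t → ∫ s in (0:ℝ)..t, f s = u (x + t • e) - u x := by
    intro t ht
    have := intervalIntegral.integral_eq_sub_of_hasDeriv_right_of_le (f := fun s => u (x + s • e))
      (f' := f) (le_of_lt ht) (hc.comp hcurve_cont).continuousOn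
      (fun s hs => (hud s hs.1).hasDerivWithinAt)
      (((hfc.mono (by rw [uIcc_of_le (le_of_lt ht)]; exact fun y hy => hy.1)).intervalIntegrable))
    rw [this]
    simp only [zero_smul, add_zero]
  have hΦ : HasDerivWithinAt (fun t => ∫ s in (0:ℝ)..t, f s) (f 0) (Ici 0) 0 := by
    apply intervalIntegral.integral_hasDerivWithinAt_right (t := Ioi 0)
    · exact (hfc.mono (by simp)).intervalIntegrable
    · exact (hfc.mono Ioi_subset_Ici_self).stronglyMeasurableAtFilter_nhdsWithin
        measurableSet_Ioi 0
    · exact (hfc 0 self_mem_Ici).mono Ioi_subset_Ici_self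
  have htend1 : Tendsto (fun t => (∫ s in (0:ℝ)..t, f s) / t) (nhdsWithin 0 (Ioi 0)) (nhds (f 0)) := by
    have h1 := (hΦ.mono Ioi_subset_Ici_self)
    rw [hasDerivWithinAt_iff_tendsto_slope, diff_singleton_eq_self (by simp)] at h1
    apply h1.congr'
    filter_upwards [self_mem_nhdsWithin] with t ht
    rw [slope_def_field]
    rw [intervalIntegral.integral_same]
    ring_nf
  have htend2 : Tendsto (fun t => (∫ s in (0:ℝ)..t, f s) / t) (nhdsWithin 0 (Ioi 0)) (nhds dv) := by
    apply hd.congr'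
    filter_upwards [self_mem_nhdsWithin] with t ht
    rw [hFTC t ht]
  have : dv = f 0 := tendsto_nhds_unique htend2 htend1
  rw [this]
  simp only [hfdef, zero_smul, add_zero]

section SectE

@[simp] lemma Xs_app0 (θ φ : ℝ) : Xs θ φ 0 = cos θ * cos φ := rfl
@[simp] lemma Xs_app1 (θ φ : ℝ) : Xs θ φ 1 = sin θ * cos φ := rfl
@[simp] lemma Xs_app2 (θ φ : ℝ) : Xs θ φ 2 = sin φ := rfl
@[simp] lemma Xsφ_app0 (θ φ : ℝ) : Xsφ θ φ 0 = -(cos θ * sin φ) := rfl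
@[simp] lemma Xsφ_app1 (θ φ : ℝ) : Xsφ θ φ 1 = -(sin θ * sin φ) := rfl
@[simp] lemma Xsφ_app2 (θ φ : ℝ) : Xsφ θ φ 2 = cos φ := rfl
@[simp] lemma Xsθ_app0 (θ φ : ℝ) : Xsθ θ φ 0 = -(sin θ * cos φ) := rfl
@[simp] lemma Xsθ_app1 (θ φ : ℝ) : Xsθ θ φ 1 = cos θ * cos φ := rfl
@[simp] lemma Xsθ_app2 (θ φ : ℝ) : Xsθ θ φ 2 = 0 := rfl
@[simp] lemma Xsθθ_app0 (θ φ : ℝ) : Xsθθ θ φ 0 = -(cos θ * cos φ) := rfl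
@[simp] lemma Xsθθ_app1 (θ φ : ℝ) : Xsθθ θ φ 1 = -(sin θ * cos φ) := rfl
@[simp] lemma Xsθθ_app2 (θ φ : ℝ) : Xsθθ θ φ 2 = 0 := rfl

noncomputable def hfunG (G : (Fin 3 → ℝ) → Fin 3 → ℝ) (θ φ : ℝ) : ℝ :=
  ∑ i, G (Xs θ φ) i * Xsφ θ φ i

noncomputable def wfun (u : (Fin 3 → ℝ) → ℝ) (θ φ : ℝ) : ℝ :=
  ∑ i, pd i u (Xs θ φ) * Xsθ θ φ i

noncomputable def Wfun (u : (Fin 3 → ℝ) → ℝ) (θ φ : ℝ) : ℝ :=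
  ∑ i, ((∑ j, Xsθ θ φ j * pd j (pd i u) (Xs θ φ)) * Xsθ θ φ i
    + pd i u (Xs θ φ) * Xsθθ θ φ i)

noncomputable def Kfun (u : (Fin 3 → ℝ) → ℝ) (G : (Fin 3 → ℝ) → Fin 3 → ℝ)
    (p p₁ : ℝ → ℝ) (θ φ : ℝ) : ℝ :=
  cos φ * (p φ * hfunG G θ φ - p₁ φ * u (Xs θ φ))

noncomputable def Ffun (u : (Fin 3 → ℝ) → ℝ) (G : (Fin 3 → ℝ) → Fin 3 → ℝ)
    (p p₁ : ℝ → ℝ) (φ : ℝ) : ℝ :=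
  ∫ θ in (0:ℝ)..(2*π), Kfun u G p p₁ θ φ

lemma Xs_mem_sreg (θ : ℝ) {φ : ℝ} (hφ : φ ∈ Ioo 0 (π/2)) : Xs θ φ ∈ sreg := by
  show sin φ ≠ 0
  exact ne_of_gt (Real.sin_pos_of_pos_of_lt_pi hφ.1 (lt_trans hφ.2 (by linarith [Real.pi_pos])))

lemma Xs_ne_zero (θ φ : ℝ) : Xs θ φ ≠ 0 := by
  intro h
  have h0 : cos θ * cos φ = 0 := congrFun h 0
  have h1 : sin θ * cos φ = 0 := congrFun h 1
  have h2 : sin φ = 0 := congrFun h 2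
  nlinarith [Real.sin_sq_add_cos_sq θ, Real.sin_sq_add_cos_sq φ, h0, h1, h2]

lemma Xs_mem_G (θ : ℝ) {φ : ℝ} (hφ : φ ∈ Icc 0 (π/2)) :
    Xs θ φ ∈ {x : Fin 3 → ℝ | 0 ≤ x 2} \ {0} := by
  refine ⟨?_, by simpa using Xs_ne_zero θ φ⟩
  show (0:ℝ) ≤ sin φ
  exact Real.sin_nonneg_of_nonneg_of_le_pi hφ.1 (le_trans hφ.2 (by linarith [Real.pi_pos]))

lemma continuous_Xstheta : Continuous (fun q : ℝ × ℝ => Xsθ q.1 q.2) := by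
  refine continuous_pi fun i => ?_
  fin_cases i
  · exact (by fun_prop : Continuous fun q : ℝ × ℝ => -(sin q.1 * cos q.2))
  · exact (by fun_prop : Continuous fun q : ℝ × ℝ => cos q.1 * cos q.2)
  · exact continuous_const
lemma continuous_Xsthetatheta : Continuous (fun q : ℝ × ℝ => Xsθθ q.1 q.2) := by
  refine continuous_pi fun i => ?_
  fin_cases i
  · exact (by fun_prop : Continuous fun q : ℝ × ℝ => -(cos q.1 * cos q.2))
  · exact (by fun_prop : Continuous fun q : ℝ × ℝ => -(sin q.1 * cos q.2))
  · exact continuous_const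

lemma contOn_comp_sphere {g : (Fin 3 → ℝ) → ℝ} (hg : ContinuousOn g sreg) :
    ContinuousOn (fun q : ℝ × ℝ => g (Xs q.1 q.2)) (univ ×ˢ Ioo 0 (π/2)) :=
  hg.comp continuous_Xs.continuousOn (fun q hq => Xs_mem_sreg q.1 hq.2)

lemma contOn_Wfun {u : (Fin 3 → ℝ) → ℝ} (hsm : ContDiffOn ℝ 2 u sreg) :
    ContinuousOn (fun q : ℝ × ℝ => Wfun u q.1 q.2) (univ ×ˢ Ioo 0 (π/2)) := by
  apply continuousOn_finset_sum
  intro i _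
  apply ContinuousOn.add
  · apply ContinuousOn.mul ?_ ((continuous_apply i).comp continuous_Xstheta).continuousOn
    apply continuousOn_finset_sum
    intro j _
    exact (((continuous_apply j).comp continuous_Xstheta).continuousOn.mul
      (contOn_comp_sphere (cont_pd2 hsm j i)))
  · exact (contOn_comp_sphere (cont_pd hsm i)).mul
      ((continuous_apply i).comp continuous_Xsthetatheta).continuousOn

lemma euler_at {u : (Fin 3 → ℝ) → ℝ} {μ : ℝ} (hsm : ContDiffOn ℝ 2 u sreg)
    (hhom : ∀ r : ℝ, 0 < r → ∀ x, u (r • x) = r ^ μ * u x) {x : Fin 3 → ℝ} (hx : x ∈ sreg) :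
    (∑ i, x i * pd i u x = μ * u x) ∧
      (∀ j, ∑ i, x i * pd i (pd j u) x = (μ - 1) * pd j u x) := by
  have hmem : ∀ r : ℝ, 0 < r → r • x ∈ sreg := by
    intro r hr
    show (r • x) 2 ≠ 0
    show r * x 2 ≠ 0
    exact mul_ne_zero (ne_of_gt hr) hx
  constructor
  · exact euler_identity (diff_of hsm hx) (fun r hr => hhom r hr x)
  · intro j
    apply euler_identity (diff_pd hsm j hx)
    intro r hr
    exact pd_homog hhom hr (diff_of hsm hx) (diff_of hsm (hmem r hr)) j

lemma Kfun_hasDerivAt {u : (Fin 3 → ℝ) → ℝ} {μ : ℝ} (hsm : ContDiffOn ℝ 2 u sreg)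
    (hhom : ∀ r : ℝ, 0 < r → ∀ x, u (r • x) = r ^ μ * u x)
    (hharm2 : ∀ x ∈ sreg, ∑ i, pd i (pd i u) x = 0)
    {G : (Fin 3 → ℝ) → Fin 3 → ℝ}
    (hGgrad : ∀ x : Fin 3 → ℝ, 0 < x 2 → ∀ i : Fin 3, G x i = pd i u x)
    {p p₁ p₂ : ℝ → ℝ}
    (hp1 : ∀ φ ∈ Set.Icc (0 : ℝ) (π / 2), HasDerivWithinAt p (p₁ φ) (Set.Icc 0 (π / 2)) φ)
    (hp2' : ∀ φ ∈ Set.Ico (0 : ℝ) (π / 2), HasDerivWithinAt p₁ (p₂ φ) (Set.Ico 0 (π / 2)) φ)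
    (hode' : ∀ φ ∈ Set.Ico (0 : ℝ) (π / 2), p₂ φ - Real.tan φ * p₁ φ + μ * (μ + 1) * p φ = 0)
    (θ : ℝ) {φ : ℝ} (hφ : φ ∈ Ioo 0 (π/2)) :
    HasDerivAt (fun ψ => Kfun u G p p₁ θ ψ) (-(p φ / cos φ) * Wfun u θ φ) φ := by
  obtain ⟨hφ0, hφ2⟩ := hφ
  have hcos : 0 < cos φ := Real.cos_pos_of_mem_Ioo ⟨by linarith [Real.pi_pos], hφ2⟩
  have hcne : cos φ ≠ 0 := ne_of_gt hcos
  have hXmem : Xs θ φ ∈ sreg := Xs_mem_sreg θ ⟨hφ0, hφ2⟩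
  have hv' : HasDerivAt (fun ψ => u (Xs θ ψ)) (∑ i, Xsφ θ φ i * pd i u (Xs θ φ)) φ :=
    hasDerivAt_comp_pd (diff_of hsm hXmem) (hasDerivAt_Xs_phi θ φ) rfl
  have hgcomp : ∀ i, HasDerivAt (fun ψ => pd i u (Xs θ ψ))
      (∑ j, Xsφ θ φ j * pd j (pd i u) (Xs θ φ)) φ :=
    fun i => hasDerivAt_comp_pd (diff_pd hsm i hXmem) (hasDerivAt_Xs_phi θ φ) rfl
  have hXφc : ∀ i, HasDerivAt (fun ψ => Xsφ θ ψ i) ((-(Xs θ φ)) i) φ :=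
    fun i => (hasDerivAt_pi.1 (hasDerivAt_Xsphi_phi θ φ)) i
  have hh' : HasDerivAt (fun ψ => ∑ i, pd i u (Xs θ ψ) * Xsφ θ ψ i)
      (∑ i, ((∑ j, Xsφ θ φ j * pd j (pd i u) (Xs θ φ)) * Xsφ θ φ i
        + pd i u (Xs θ φ) * (-(Xs θ φ)) i)) φ :=
    HasDerivAt.fun_sum (fun i _ => ((hgcomp i).mul (hXφc i)))
  have hp' : HasDerivAt p (p₁ φ) φ :=
    (hp1 φ ⟨le_of_lt hφ0, le_of_lt hφ2⟩).hasDerivAt (Icc_mem_nhds hφ0 hφ2)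
  have hp1d : HasDerivAt p₁ (p₂ φ) φ :=
    (hp2' φ ⟨le_of_lt hφ0, hφ2⟩).hasDerivAt
      (mem_of_superset (Ioo_mem_nhds hφ0 hφ2) Ioo_subset_Ico_self)
  have hKs := (Real.hasDerivAt_cos φ).mul ((hp'.mul hh').sub (hp1d.mul hv'))
  have hfeq : (fun ψ => cos ψ * (p ψ * (∑ i, pd i u (Xs θ ψ) * Xsφ θ ψ i) - p₁ ψ * u (Xs θ ψ)))
      =ᶠ[nhds φ] (fun ψ => Kfun u G p p₁ θ ψ) := by
    filter_upwards [Ioo_mem_nhds hφ0 hφ2] with ψ hψ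
    have hG : ∀ i, G (Xs θ ψ) i = pd i u (Xs θ ψ) :=
      hGgrad _ (show (0:ℝ) < sin ψ from
        Real.sin_pos_of_pos_of_lt_pi hψ.1 (lt_trans hψ.2 (by linarith [Real.pi_pos])))
    simp only [Kfun, hfunG]
    have hsc : (∑ i, G (Xs θ ψ) i * Xsφ θ ψ i) = ∑ i, pd i u (Xs θ ψ) * Xsφ θ ψ i :=
      Finset.sum_congr rfl (fun i _ => by rw [hG i])
    rw [hsc]
  have hK2 := hKs.congr_of_eventuallyEq hfeq.symm
  -- now fix the derivative value
  refine hK2.congr_deriv ?_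
  symm
  -- algebraic identity
  have hEu := euler_at hsm hhom hXmem
  have hE1 := hEu.1
  have hE20 := hEu.2 0
  have hE21 := hEu.2 1
  have hE22 := hEu.2 2
  have hharmX := hharm2 _ hXmem
  rw [Fin.sum_univ_three] at hE1 hE20 hE21 hE22 hharmX
  have hodeφ := hode' φ ⟨le_of_lt hφ0, hφ2⟩
  have hODE : cos φ * p₂ φ - sin φ * p₁ φ + μ * (μ+1) * p φ * cos φ = 0 := by
    have h9 : cos φ * (p₂ φ - Real.tan φ * p₁ φ + μ * (μ + 1) * p φ) = 0 := by
      rw [hodeφ, mul_zero]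
    rw [Real.tan_eq_sin_div_cos] at h9
    have h10 : cos φ * (p₂ φ - sin φ / cos φ * p₁ φ + μ * (μ + 1) * p φ)
        = cos φ * p₂ φ - sin φ * p₁ φ + μ * (μ+1) * p φ * cos φ := by
      field_simp
    rw [h10] at h9
    exact h9
  have kalg := key_algebra (cos θ) (sin θ) (cos φ) (sin φ) μ (u (Xs θ φ))
    (pd 0 u (Xs θ φ)) (pd 1 u (Xs θ φ)) (pd 2 u (Xs θ φ))
    (pd 0 (pd 0 u) (Xs θ φ)) (pd 0 (pd 1 u) (Xs θ φ)) (pd 0 (pd 2 u) (Xs θ φ))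
    (pd 1 (pd 0 u) (Xs θ φ)) (pd 1 (pd 1 u) (Xs θ φ)) (pd 1 (pd 2 u) (Xs θ φ))
    (pd 2 (pd 0 u) (Xs θ φ)) (pd 2 (pd 1 u) (Xs θ φ)) (pd 2 (pd 2 u) (Xs θ φ))
    (p φ) (p₁ φ) (p₂ φ)
    (Real.sin_sq_add_cos_sq θ) (Real.sin_sq_add_cos_sq φ)
    hharmX hE1 hE20 hE21 hE22 hODE
  rw [show -(p φ / cos φ) * Wfun u θ φ = -(p φ * Wfun u θ φ) / cos φ from by ring]
  rw [div_eq_iff hcne]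
  simp only [Wfun, Fin.sum_univ_three, Xs_app0, Xs_app1, Xs_app2, Xsφ_app0, Xsφ_app1,
    Xsφ_app2, Xsθ_app0, Xsθ_app1, Xsθ_app2, Xsθθ_app0, Xsθθ_app1, Xsθθ_app2, Pi.neg_apply, Pi.mul_apply, Pi.sub_apply]
  linear_combination -kalg

end SectE

set_option maxHeartbeats 1000000 in
/-- **Identity (2.9) in ℝ³.** Let `u` be a `μ`-homogeneous solution of the thin obstacle
problem in `ℝ³` whose gradient extends continuously from `{z > 0}` to `{z ≥ 0} \ {0}`,
and let `p` be a Legendre function for `(3, μ)` with derivative `p₁`. If `d θ` denotes the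
one-sided derivative `∂_z⁺u` at the equatorial point `(cos θ, sin θ, 0)`, then
`p'(0)·∫₀^{2π} u = p(0)·∫₀^{2π} ∂_z⁺u` along the equator. -/
theorem integration_by_parts_identity (μ : ℝ) (hμ : 0 < μ)
    (u : (Fin 3 → ℝ) → ℝ) (hu : IsTOPSol μ u 2)
    (G : (Fin 3 → ℝ) → Fin 3 → ℝ)
    (hGcont : ContinuousOn G ({x : Fin 3 → ℝ | 0 ≤ x 2} \ {0}))
    (hGgrad : ∀ x : Fin 3 → ℝ, 0 < x 2 → ∀ i : Fin 3, G x i = pd i u x)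
    (p p₁ : ℝ → ℝ) (hp : IsLegendre 3 μ p p₁)
    (d : ℝ → ℝ) (hd : ∀ θ : ℝ, HasUpperDeriv u 2 ![Real.cos θ, Real.sin θ, 0] (d θ)) :
    p₁ 0 * (∫ θ in (0 : ℝ)..(2 * π), u ![Real.cos θ, Real.sin θ, 0])
      = p 0 * ∫ θ in (0 : ℝ)..(2 * π), d θ := by
  obtain ⟨hp1, hp1c, ⟨p₂, hp2', hp2c, hode⟩, hpval, hp1val⟩ := hp
  have hπ : (0:ℝ) < π := Real.pi_pos
  have h2π : (0:ℝ) ≤ 2*π := by positivity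
  have hode' : ∀ φ ∈ Set.Ico (0:ℝ) (π/2), p₂ φ - Real.tan φ * p₁ φ + μ*(μ+1)*p φ = 0 := by
    intro φ hφ
    have h := hode φ hφ
    push_cast at h
    linear_combination h
  have hsm : ContDiffOn ℝ 2 u sreg := hu.smooth.mono (fun x hx hmem => hx hmem.1)
  have hharm2 : ∀ x ∈ sreg, ∑ i, pd i (pd i u) x = 0 := fun x hx => hu.harm x (fun hmem => hx hmem.1)
  have hdod : ∀ θ, d θ = G ![Real.cos θ, Real.sin θ, 0] 2 := fun θ =>
    upper_deriv_eq_G u hu.cont (fun x hx => diff_of hsm hx) G hGcont hGgrad θ (hd θ)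
  have hKd : ∀ θ : ℝ, ∀ φ ∈ Ioo 0 (π/2), HasDerivAt (fun ψ => Kfun u G p p₁ θ ψ)
      (-(p φ / Real.cos φ) * Wfun u θ φ) φ :=
    fun θ φ hφ => Kfun_hasDerivAt hsm hu.homog hharm2 hGgrad hp1 hp2' hode' θ hφ
  -- θ-direction FTC: the W-integral vanishes
  have hWper : ∀ φ : ℝ, wfun u (2*π) φ = wfun u 0 φ := by
    intro φ
    have hX : Xs (2*π) φ = Xs 0 φ := by
      funext i; fin_cases i <;> simp [Xs, Real.cos_two_pi, Real.sin_two_pi]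
    have hXθ : Xsθ (2*π) φ = Xsθ 0 φ := by
      funext i; fin_cases i <;> simp [Xsθ, Real.cos_two_pi, Real.sin_two_pi]
    simp only [wfun, hX, hXθ]
  have hw' : ∀ φ ∈ Ioo 0 (π/2), ∀ θ : ℝ, HasDerivAt (fun θ => wfun u θ φ) (Wfun u θ φ) θ := by
    intro φ hφ θ
    have hXmem := Xs_mem_sreg θ hφ
    exact HasDerivAt.fun_sum (fun i _ =>
      ((hasDerivAt_comp_pd (diff_pd hsm i hXmem) (hasDerivAt_Xs_theta θ φ) rfl).mul
        ((hasDerivAt_pi.1 (hasDerivAt_Xstheta_theta θ φ)) i)))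
  have hWcont : ContinuousOn (fun q : ℝ × ℝ => Wfun u q.1 q.2) (univ ×ˢ Ioo 0 (π/2)) :=
    contOn_Wfun hsm
  have hWint : ∀ φ ∈ Ioo 0 (π/2), ∫ θ in (0:ℝ)..(2*π), Wfun u θ φ = 0 := by
    intro φ hφ
    have hcontθ : ContinuousOn (fun θ => Wfun u θ φ) (uIcc 0 (2*π)) := by
      have e1 : (fun θ : ℝ => Wfun u θ φ)
          = (fun q : ℝ × ℝ => Wfun u q.1 q.2) ∘ (fun θ : ℝ => (θ, φ)) := rfl
      rw [e1]
      exact (ContinuousOn.comp hWcont (continuous_id.prodMk continuous_const).continuousOn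
        (fun θ _ => ⟨mem_univ _, hφ⟩)).mono (subset_univ _)
    rw [intervalIntegral.integral_eq_sub_of_hasDerivAt (fun θ _ => hw' φ hφ θ)
      (hcontθ.intervalIntegrable)]
    rw [hWper φ, sub_self]
  -- joint continuity of Kfun
  have hpC : ContinuousOn p (Icc 0 (π/2)) := fun ψ hψ => (hp1 ψ hψ).continuousWithinAt
  have hKjoint : ContinuousOn (fun q : ℝ × ℝ => Kfun u G p p₁ q.1 q.2)
      (univ ×ˢ Icc 0 (π/2)) := by
    apply ContinuousOn.mul ((Real.continuous_cos.comp continuous_snd).continuousOn)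
    apply ContinuousOn.sub
    · apply ContinuousOn.mul (hpC.comp continuous_snd.continuousOn (fun q hq => hq.2))
      apply continuousOn_finset_sum
      intro i _
      exact (((continuous_apply i).comp_continuousOn
          (hGcont.comp continuous_Xs.continuousOn (fun q hq => Xs_mem_G q.1 hq.2)))).mul
        ((continuous_apply i).comp continuous_Xsphi).continuousOn
    · exact (hp1c.comp continuous_snd.continuousOn (fun q hq => hq.2)).mul
        (hu.cont.comp continuous_Xs).continuousOn
  have hKθcont : ∀ φ ∈ Icc (0:ℝ) (π/2), Continuous fun θ => Kfun u G p p₁ θ φ := by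
    intro φ hφ
    have e1 : (fun θ : ℝ => Kfun u G p p₁ θ φ)
        = (fun q : ℝ × ℝ => Kfun u G p p₁ q.1 q.2) ∘ (fun θ : ℝ => (θ, φ)) := rfl
    rw [e1, ← continuousOn_univ]
    exact ContinuousOn.comp hKjoint (continuous_id.prodMk continuous_const).continuousOn
      (fun θ _ => ⟨mem_univ _, hφ⟩)
  have hKφcont : ∀ θ : ℝ, ContinuousOn (fun φ => Kfun u G p p₁ θ φ) (Icc 0 (π/2)) := by
    intro θ
    have e1 : (fun φ : ℝ => Kfun u G p p₁ θ φ)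
        = (fun q : ℝ × ℝ => Kfun u G p p₁ q.1 q.2) ∘ (fun φ : ℝ => (θ, φ)) := rfl
    rw [e1]
    exact ContinuousOn.comp hKjoint (continuous_const.prodMk continuous_id).continuousOn
      (fun φ hφ => ⟨mem_univ _, hφ⟩)
  -- constancy of Ffun on the open interval
  have hFab : ∀ a b : ℝ, a ∈ Ioo 0 (π/2) → b ∈ Ioo 0 (π/2) → a ≤ b →
      Ffun u G p p₁ b = Ffun u G p p₁ a := by
    intro a b ha hb hab
    have hIccsub : Icc a b ⊆ Ioo 0 (π/2) :=
      fun φ hφ => ⟨lt_of_lt_of_le ha.1 hφ.1, lt_of_le_of_lt hφ.2 hb.2⟩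
    have hDcont : ContinuousOn (fun q : ℝ × ℝ => -(p q.2 / Real.cos q.2) * Wfun u q.1 q.2)
        (univ ×ˢ Icc a b) := by
      apply ContinuousOn.mul
      · apply ContinuousOn.neg
        apply ContinuousOn.div
        · exact hpC.comp continuous_snd.continuousOn
            (fun q hq => ⟨le_of_lt (hIccsub hq.2).1, le_of_lt (hIccsub hq.2).2⟩)
        · exact (Real.continuous_cos.comp continuous_snd).continuousOn
        · intro q hq
          exact ne_of_gt (Real.cos_pos_of_mem_Ioo ⟨by linarith [(hIccsub hq.2).1], (hIccsub hq.2).2⟩)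
      · exact hWcont.mono (prod_mono Subset.rfl hIccsub)
    have hFTCφ : ∀ θ : ℝ, ∫ φ in a..b, -(p φ / Real.cos φ) * Wfun u θ φ
        = Kfun u G p p₁ θ b - Kfun u G p p₁ θ a := by
      intro θ
      apply intervalIntegral.integral_eq_sub_of_hasDerivAt
      · intro φ hφ
        rw [uIcc_of_le hab] at hφ
        exact hKd θ φ (hIccsub hφ)
      · apply ContinuousOn.intervalIntegrable
        rw [uIcc_of_le hab]
        have e1 : (fun φ : ℝ => -(p φ / Real.cos φ) * Wfun u θ φ)
            = (fun q : ℝ × ℝ => -(p q.2 / Real.cos q.2) * Wfun u q.1 q.2)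
              ∘ (fun φ : ℝ => (θ, φ)) := rfl
        rw [e1]
        exact ContinuousOn.comp hDcont (continuous_const.prodMk continuous_id).continuousOn
          (fun φ hφ => ⟨mem_univ _, hφ⟩)
    have hstep1 : Ffun u G p p₁ b - Ffun u G p p₁ a
        = ∫ θ in (0:ℝ)..(2*π), (Kfun u G p p₁ θ b - Kfun u G p p₁ θ a) := by
      rw [intervalIntegral.integral_sub
        ((hKθcont b ⟨le_of_lt hb.1, le_of_lt hb.2⟩).intervalIntegrable _ _)
        ((hKθcont a ⟨le_of_lt ha.1, le_of_lt ha.2⟩).intervalIntegrable _ _)]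
      rfl
    have hstep2 : ∫ θ in (0:ℝ)..(2*π), (Kfun u G p p₁ θ b - Kfun u G p p₁ θ a)
        = ∫ θ in (0:ℝ)..(2*π), ∫ φ in a..b, -(p φ / Real.cos φ) * Wfun u θ φ :=
      (intervalIntegral.integral_congr (fun θ _ => (hFTCφ θ).symm))
    have hswap : ∫ θ in (0:ℝ)..(2*π), ∫ φ in a..b, -(p φ / Real.cos φ) * Wfun u θ φ
        = ∫ φ in a..b, ∫ θ in (0:ℝ)..(2*π), -(p φ / Real.cos φ) * Wfun u θ φ := by
      rw [intervalIntegral.integral_of_le h2π, intervalIntegral.integral_of_le hab]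
      simp_rw [intervalIntegral.integral_of_le hab, intervalIntegral.integral_of_le h2π]
      apply MeasureTheory.integral_integral_swap
      rw [Measure.prod_restrict]
      apply MeasureTheory.IntegrableOn.mono_set
        (t := Icc (0:ℝ) (2*π) ×ˢ Icc a b)
      · apply ContinuousOn.integrableOn_compact (isCompact_Icc.prod isCompact_Icc)
        exact hDcont.mono (prod_mono (subset_univ _) Subset.rfl)
      · exact prod_mono Ioc_subset_Icc_self Ioc_subset_Icc_self
    have hzero : ∀ φ ∈ uIcc a b, (∫ θ in (0:ℝ)..(2*π), -(p φ / Real.cos φ) * Wfun u θ φ) = 0 := by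
      intro φ hφ
      rw [uIcc_of_le hab] at hφ
      rw [intervalIntegral.integral_const_mul, hWint φ (hIccsub hφ), mul_zero]
    have hend : ∫ φ in a..b, ∫ θ in (0:ℝ)..(2*π), -(p φ / Real.cos φ) * Wfun u θ φ = 0 := by
      rw [intervalIntegral.integral_congr (g := fun _ => (0:ℝ)) hzero]
      simp
    have := hstep1.trans (hstep2.trans (hswap.trans hend))
    linarith [this]
  -- dominated convergence: continuity of Ffun at the endpoints
  obtain ⟨C, hC⟩ := (isCompact_Icc.prod isCompact_Icc).exists_bound_of_continuousOn
    (hKjoint.mono (prod_mono (subset_univ _) (Subset.rfl : Icc (0:ℝ) (π/2) ⊆ Icc 0 (π/2))))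
  have hDC : ∀ φ₀ ∈ Icc (0:ℝ) (π/2), Tendsto (Ffun u G p p₁)
      (nhdsWithin φ₀ (Ioo 0 (π/2))) (nhds (Ffun u G p p₁ φ₀)) := by
    intro φ₀ hφ₀
    apply intervalIntegral.tendsto_integral_filter_of_dominated_convergence (bound := fun _ => C)
    · filter_upwards [self_mem_nhdsWithin] with φ hφ
      exact (hKθcont φ (Ioo_subset_Icc_self hφ)).aestronglyMeasurable
    · filter_upwards [self_mem_nhdsWithin] with φ hφ
      apply Eventually.of_forall
      intro θ hθ
      rw [uIoc_of_le h2π] at hθ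
      exact hC ((θ, φ) : ℝ × ℝ) ⟨⟨le_of_lt hθ.1, hθ.2⟩, Ioo_subset_Icc_self hφ⟩
    · exact intervalIntegrable_const
    · apply Eventually.of_forall
      intro θ _
      exact ((hKφcont θ) φ₀ hφ₀).mono_left (nhdsWithin_mono φ₀ Ioo_subset_Icc_self)
  have hmid : π/4 ∈ Ioo (0:ℝ) (π/2) := ⟨by positivity, by linarith⟩
  have hconst : ∀ φ ∈ Ioo (0:ℝ) (π/2), Ffun u G p p₁ φ = Ffun u G p p₁ (π/4) := by
    intro φ hφ
    rcases le_total φ (π/4) with h | h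
    · exact (hFab φ (π/4) hφ hmid h).symm
    · exact hFab (π/4) φ hmid hφ h
  have hcl : closure (Ioo (0:ℝ) (π/2)) = Icc 0 (π/2) :=
    closure_Ioo (by positivity : (0:ℝ) < π/2).ne
  have hne0 : (nhdsWithin (0:ℝ) (Ioo 0 (π/2))).NeBot := by
    apply mem_closure_iff_nhdsWithin_neBot.1
    rw [hcl]; exact ⟨le_refl 0, by positivity⟩
  have hne2 : (nhdsWithin (π/2:ℝ) (Ioo 0 (π/2))).NeBot := by
    apply mem_closure_iff_nhdsWithin_neBot.1
    rw [hcl]; exact ⟨by positivity, le_refl _⟩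
  have hevc : ∀ x : ℝ, (Ffun u G p p₁) =ᶠ[nhdsWithin x (Ioo 0 (π/2))]
      fun _ => Ffun u G p p₁ (π/4) := by
    intro x
    filter_upwards [self_mem_nhdsWithin] with φ hφ using hconst φ hφ
  have hF0 : Ffun u G p p₁ 0 = Ffun u G p p₁ (π/4) := by
    haveI := hne0
    exact tendsto_nhds_unique (hDC 0 ⟨le_refl 0, by positivity⟩)
      (Tendsto.congr' (hevc 0).symm tendsto_const_nhds)
  have hFpi2c : Ffun u G p p₁ (π/2) = Ffun u G p p₁ (π/4) := by
    haveI := hne2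
    exact tendsto_nhds_unique (hDC (π/2) ⟨by positivity, le_refl _⟩)
      (Tendsto.congr' (hevc (π/2)).symm tendsto_const_nhds)
  have hFpi2 : Ffun u G p p₁ (π/2) = 0 := by
    have hK0 : ∀ θ : ℝ, Kfun u G p p₁ θ (π/2) = 0 := by
      intro θ; simp [Kfun, Real.cos_pi_div_two]
    simp only [Ffun]
    rw [intervalIntegral.integral_congr (g := fun _ => (0:ℝ)) (fun θ _ => hK0 θ)]
    simp
  have hF0z : Ffun u G p p₁ 0 = 0 := by rw [hF0, ← hFpi2c, hFpi2]
  have hXs0 : ∀ θ : ℝ, Xs θ 0 = ![Real.cos θ, Real.sin θ, 0] := by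
    intro θ; funext i; fin_cases i <;> simp [Xs]
  have hKfun0 : ∀ θ : ℝ, Kfun u G p p₁ θ 0
      = p 0 * d θ - p₁ 0 * u ![Real.cos θ, Real.sin θ, 0] := by
    intro θ
    have h1 : hfunG G θ 0 = G ![Real.cos θ, Real.sin θ, 0] 2 := by
      rw [hfunG, Fin.sum_univ_three, hXs0 θ]
      simp [Xsφ_app0, Xsφ_app1, Xsφ_app2, Real.sin_zero, Real.cos_zero]
    simp only [Kfun, h1, hXs0 θ, Real.cos_zero, one_mul]
    rw [← hdod θ]
  have hdcont : Continuous d := by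
    have h2 : Continuous fun θ : ℝ => G (Xs θ 0) 2 := by
      have e1 : (fun θ : ℝ => G (Xs θ 0) 2)
          = (fun x : Fin 3 → ℝ => G x 2)
            ∘ ((fun q : ℝ × ℝ => Xs q.1 q.2) ∘ (fun θ : ℝ => (θ, (0:ℝ)))) := rfl
      rw [e1, ← continuousOn_univ]
      exact ContinuousOn.comp ((continuous_apply (2:Fin 3)).comp_continuousOn hGcont)
        ((continuous_Xs.comp (continuous_id.prodMk continuous_const)).continuousOn)
        (fun θ _ => Xs_mem_G θ ⟨le_refl 0, by positivity⟩)
    have hde : d = fun θ => G (Xs θ 0) 2 := funext fun θ => by rw [hdod θ, hXs0 θ]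
    rw [hde]; exact h2
  have hucont : Continuous fun θ : ℝ => u ![Real.cos θ, Real.sin θ, 0] := by
    have hue : (fun θ : ℝ => u ![Real.cos θ, Real.sin θ, 0]) = fun θ => u (Xs θ 0) :=
      funext fun θ => by rw [hXs0 θ]
    have e1 : (fun θ : ℝ => u (Xs θ 0))
        = u ∘ ((fun q : ℝ × ℝ => Xs q.1 q.2) ∘ (fun θ : ℝ => (θ, (0:ℝ)))) := rfl
    rw [hue, e1]
    exact hu.cont.comp (continuous_Xs.comp (continuous_id.prodMk continuous_const))
  have hsplit : Ffun u G p p₁ 0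
      = p 0 * (∫ θ in (0:ℝ)..(2*π), d θ)
        - p₁ 0 * ∫ θ in (0:ℝ)..(2*π), u ![Real.cos θ, Real.sin θ, 0] := by
    simp only [Ffun]
    rw [intervalIntegral.integral_congr
      (g := fun θ => p 0 * d θ - p₁ 0 * u ![Real.cos θ, Real.sin θ, 0]) (fun θ _ => hKfun0 θ)]
    rw [intervalIntegral.integral_sub (f := fun θ => p 0 * d θ)
      (g := fun θ => p₁ 0 * u ![Real.cos θ, Real.sin θ, 0])
      ((continuous_const.mul hdcont).intervalIntegrable _ _)
      ((continuous_const.mul hucont).intervalIntegrable _ _)]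
    rw [intervalIntegral.integral_const_mul, intervalIntegral.integral_const_mul]
  rw [hsplit] at hF0z
  linarith [hF0z]
end

section
/- For every integer n ≥ 2, every real μ ≥ 0, and every M > 0 there exists a constant C > 0 (depending only on n, μ and M) with the following property: if g : [0, π/2) → ℝ satisfies |g(φ)| ≤ M for all φ, and h : [0, π/2) → ℝ is a C² function satisfying h''(φ) − (n−2)·tan(φ)·h'(φ) + μ(μ+n−2)·h(φ) = (n−2)·g(φ)/cos(φ) for all φ ∈ [0, π/2), with |h(0)| ≤ M and |h'(0)| ≤ M, then |h'(φ)| ≤ C · (cos φ)^{2−n} for all φ ∈ [0, π/2). -/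
open Real Set Filter

private lemma legendre_aux_pow_pred (c : ℝ) (hc : c ≠ 0) (k : ℕ) :
    (k : ℝ) * c ^ (k - 1) = (k : ℝ) * c ^ k / c := by
  cases k with
  | zero => simp
  | succ m =>
    have : c ^ (m + 1) / c = c ^ m := by
      field_simp [pow_succ]
      ring
    simp only [Nat.add_sub_cancel]
    rw [mul_div_assoc, this]

private lemma legendre_aux_pow_le (c : ℝ) (hc : 0 < c) (hc1 : c ≤ 1) (k : ℕ) :
    (k : ℝ) * c ^ k / c ≤ (k : ℝ) := by
  cases k with
  | zero => simp
  | succ m =>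
    have h1 : c ^ (m + 1) / c = c ^ m := by field_simp [pow_succ]; ring
    rw [mul_div_assoc, h1]
    have h2 : c ^ m ≤ 1 := pow_le_one₀ hc.le hc1
    nlinarith [Nat.cast_nonneg (α := ℝ) (m + 1)]

set_option maxHeartbeats 2000000 in
/-- **Lemma 5.1, first part.** Solutions `h` of the inhomogeneous Legendre ODE
with bounded data satisfy the stated derivative bound. -/
theorem legendre_ode_derivative_bound (n : ℕ) (hn : 2 ≤ n) (μ : ℝ) (hμ : 0 ≤ μ)
    (M : ℝ) (hM : 0 < M) :
    ∃ C : ℝ, 0 < C ∧ ∀ g h h₁ h₂ : ℝ → ℝ,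
      (∀ φ ∈ Set.Ico (0 : ℝ) (π / 2), |g φ| ≤ M) →
      (∀ φ ∈ Set.Ico (0 : ℝ) (π / 2), HasDerivWithinAt h (h₁ φ) (Set.Ico 0 (π / 2)) φ) →
      (∀ φ ∈ Set.Ico (0 : ℝ) (π / 2), HasDerivWithinAt h₁ (h₂ φ) (Set.Ico 0 (π / 2)) φ) →
      ContinuousOn h₂ (Set.Ico 0 (π / 2)) →
      (∀ φ ∈ Set.Ico (0 : ℝ) (π / 2),
        h₂ φ - (n - 2 : ℝ) * Real.tan φ * h₁ φ + μ * (μ + n - 2) * h φ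
          = (n - 2 : ℝ) * g φ / Real.cos φ) →
      |h 0| ≤ M → |h₁ 0| ≤ M →
      ∀ φ ∈ Set.Ico (0 : ℝ) (π / 2), |h₁ φ| ≤ C * Real.cos φ ^ ((2 : ℝ) - n) := by
  have hπ : (0:ℝ) < π / 2 := by positivity
  set k := n - 2 with hkdef
  have hn2 : ((n:ℝ) - 2) = (k:ℝ) := by
    have : ((k:ℕ):ℝ) = (n:ℝ) - 2 := by
      rw [hkdef]
      push_cast [Nat.cast_sub hn]
      ring
    linarith
  set L := μ * (μ + (n:ℝ) - 2) with hLdef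
  have hL : 0 ≤ L := by
    apply mul_nonneg hμ
    have : (2:ℝ) ≤ (n:ℝ) := by exact_mod_cast hn
    linarith
  set K := (k:ℝ) * M + 1 with hKdef
  have hK : 0 < K := by positivity
  set A := (1 + M^2 + L*M^2) * Real.exp (K * (π/2)) with hAdef
  have hA : 0 < A := by positivity
  refine ⟨Real.sqrt A, Real.sqrt_pos.mpr hA, ?_⟩
  intro g h h₁ h₂ hg hh hh₁ _hcont hode hh0 hh10 φ hφ
  set s : Set ℝ := Set.Ico (0:ℝ) (π/2) with hsdef
  have hcos : ∀ t ∈ s, 0 < Real.cos t := by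
    intro t ht
    apply Real.cos_pos_of_mem_Ioo
    constructor <;> [linarith [ht.1]; exact ht.2]
  have hsin : ∀ t ∈ s, 0 ≤ Real.sin t := by
    intro t ht
    apply Real.sin_nonneg_of_nonneg_of_le_pi ht.1
    linarith [ht.2, Real.pi_pos]
  set w : ℝ → ℝ := fun t => Real.cos t ^ k * h₁ t with hwdef
  set u : ℝ → ℝ := fun t =>
    1 + (w t)^2 + L * (Real.cos t ^ (2*k) * (h t)^2) with hudef
  have hunonneg : ∀ t ∈ s, 0 ≤ L * (Real.cos t ^ (2*k) * (h t)^2) := by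
    intro t ht
    exact mul_nonneg hL (mul_nonneg (pow_nonneg (hcos t ht).le _) (sq_nonneg _))
  have hupos : ∀ t ∈ s, 0 < u t := by
    intro t ht
    have := hunonneg t ht
    simp only [hudef]
    nlinarith [sq_nonneg (w t)]
  -- key derivative bound for u
  have key : ∀ t, ∃ d, t ∈ s → HasDerivWithinAt u d s t ∧ d ≤ K * u t := by
    intro t
    by_cases ht : t ∈ s
    swap
    · exact ⟨0, fun h' => absurd h' ht⟩
    have hct := hcos t ht
    have hst := hsin t ht
    have hc1 : Real.cos t ≤ 1 := Real.cos_le_one t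
    have hc : HasDerivAt Real.cos (-Real.sin t) t := Real.hasDerivAt_cos t
    -- derivative of w
    have hw' : HasDerivWithinAt w
        (((k:ℝ) * Real.cos t ^ (k-1) * (-Real.sin t)) * h₁ t + Real.cos t ^ k * h₂ t) s t :=
      ((hc.pow k).hasDerivWithinAt).mul (hh₁ t ht)
    have hwD : HasDerivWithinAt w
        (-L * Real.cos t ^ k * h t + (k:ℝ) * g t * Real.cos t ^ k / Real.cos t) s t := by
      convert hw' using 1
      have hode' := hode t ht
      have h2eq : h₂ t = ((n:ℝ)-2) * Real.tan t * h₁ t - L * h t + ((n:ℝ)-2) * g t / Real.cos t := by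
        linarith [hode']
      rw [h2eq, Real.tan_eq_sin_div_cos, hn2, legendre_aux_pow_pred _ hct.ne' k]
      field_simp
      ring
    have hq : HasDerivWithinAt (fun x => Real.cos x ^ (2*k) * (h x)^2)
        (((2*k : ℕ):ℝ) * Real.cos t ^ (2*k-1) * (-Real.sin t) * (h t)^2
          + Real.cos t ^ (2*k) * (2 * h t ^ 1 * h₁ t)) s t :=
      ((hc.pow (2*k)).hasDerivWithinAt).mul ((hh t ht).pow 2)
    have hu' : HasDerivWithinAt u
        (2 * w t ^ 1 * (-L * Real.cos t ^ k * h t + (k:ℝ) * g t * Real.cos t ^ k / Real.cos t)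
          + L * (((2*k : ℕ):ℝ) * Real.cos t ^ (2*k-1) * (-Real.sin t) * (h t)^2
            + Real.cos t ^ (2*k) * (2 * h t ^ 1 * h₁ t))) s t :=
      ((hwD.pow 2).const_add 1).add (hq.const_mul L)
    refine ⟨_, fun _ => ⟨hu', ?_⟩⟩
    -- rewrite derivative into a clean form
    have hdeq : (2 * w t ^ 1 * (-L * Real.cos t ^ k * h t + (k:ℝ) * g t * Real.cos t ^ k / Real.cos t)
          + L * (((2*k : ℕ):ℝ) * Real.cos t ^ (2*k-1) * (-Real.sin t) * (h t)^2
            + Real.cos t ^ (2*k) * (2 * h t ^ 1 * h₁ t)))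
        = 2 * ((k:ℝ) * Real.cos t ^ k / Real.cos t) * (g t * w t)
          - 2 * L * ((2*k : ℕ):ℝ) * Real.cos t ^ (2*k) / Real.cos t * Real.sin t * (h t)^2 / 2 := by
      rw [legendre_aux_pow_pred _ hct.ne' (2*k)]
      have h2k : Real.cos t ^ (2*k) = Real.cos t ^ k * Real.cos t ^ k := by
        rw [two_mul, pow_add]
      simp only [hwdef, h2k, pow_one]
      field_simp
      ring
    rw [hdeq]
    -- now bound
    set P := (k:ℝ) * Real.cos t ^ k / Real.cos t with hPdef
    have hP0 : 0 ≤ P := by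
      apply div_nonneg _ hct.le
      positivity
    have hPk : P ≤ (k:ℝ) := legendre_aux_pow_le _ hct hc1 k
    have hgM := hg t ht
    have hgw : g t * w t ≤ M * |w t| := by
      calc g t * w t ≤ |g t * w t| := le_abs_self _
        _ = |g t| * |w t| := abs_mul _ _
        _ ≤ M * |w t| := mul_le_mul_of_nonneg_right hgM (abs_nonneg _)
    have hterm2 : (0:ℝ) ≤ 2 * L * ((2*k : ℕ):ℝ) * Real.cos t ^ (2*k) / Real.cos t * Real.sin t * (h t)^2 / 2 := by
      have : (0:ℝ) ≤ Real.cos t ^ (2*k) := pow_nonneg hct.le _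
      positivity
    have hchain1 : 2 * P * (g t * w t) ≤ 2 * (k:ℝ) * (M * |w t|) := by
      calc 2 * P * (g t * w t) ≤ 2 * P * (M * |w t|) := by
            apply mul_le_mul_of_nonneg_left hgw (by linarith)
        _ ≤ 2 * (k:ℝ) * (M * |w t|) := by
            apply mul_le_mul_of_nonneg_right (by linarith) (by positivity)
    have habs2 : 2 * |w t| ≤ 1 + (w t)^2 := by
      nlinarith [sq_nonneg (|w t| - 1), sq_abs (w t)]
    have hw2 : 2 * (M * |w t|) ≤ M * (1 + (w t)^2) := by
      have : M * (2 * |w t|) ≤ M * (1 + (w t)^2) :=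
        mul_le_mul_of_nonneg_left habs2 hM.le
      linarith
    have hkM : (0:ℝ) ≤ (k:ℝ) * M := by positivity
    have huge : (k:ℝ) * M * (1 + (w t)^2) ≤ K * u t := by
      have h1 := hunonneg t ht
      have h3 : 0 ≤ ((k:ℝ) * M) * (L * (Real.cos t ^ (2*k) * (h t)^2)) :=
        mul_nonneg hkM h1
      have h4 : 0 ≤ (w t)^2 := sq_nonneg _
      have h5 : u t = 1 + (w t)^2 + L * (Real.cos t ^ (2*k) * (h t)^2) := rfl
      rw [h5, hKdef]
      nlinarith [h3, h4, h1]
    have hfin : 2 * P * (g t * w t) ≤ (k:ℝ) * M * (1 + (w t)^2) := by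
      nlinarith [Nat.cast_nonneg (α := ℝ) k]
    exact le_trans (le_trans (sub_le_self _ hterm2) hfin) huge
  choose D hD using key
  -- Gronwall via monotonicity of v = u * exp(-K t)
  set v : ℝ → ℝ := fun x => u x * Real.exp (-(K * x)) with hvdef
  have hvD : ∀ t ∈ s, HasDerivWithinAt v
      (D t * Real.exp (-(K * t)) + u t * (Real.exp (-(K * t)) * -(K * 1))) s t := by
    intro t ht
    have hexp : HasDerivAt (fun x => Real.exp (-(K * x))) (Real.exp (-(K * t)) * -(K * 1)) t :=
      (((hasDerivAt_id t).const_mul K).neg).exp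
    exact ((hD t ht).1).mul hexp.hasDerivWithinAt
  have hvle : ∀ t ∈ s,
      D t * Real.exp (-(K * t)) + u t * (Real.exp (-(K * t)) * -(K * 1)) ≤ 0 := by
    intro t ht
    have h1 := (hD t ht).2
    have h2 := Real.exp_pos (-(K * t))
    nlinarith
  have hsub : Set.Icc (0:ℝ) φ ⊆ s := fun x hx => ⟨hx.1, lt_of_le_of_lt hx.2 hφ.2⟩
  have hucont : ContinuousOn u s := fun t ht => ((hD t ht).1).continuousWithinAt
  have hvcont : ContinuousOn v (Set.Icc 0 φ) := by
    apply ContinuousOn.mul (hucont.mono hsub)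
    exact (Real.continuous_exp.comp (continuous_const.mul continuous_id).neg).continuousOn
  have hmem : ∀ x ∈ Set.Ioo (0:ℝ) φ, HasDerivAt v
      (D x * Real.exp (-(K * x)) + u x * (Real.exp (-(K * x)) * -(K * 1))) x := by
    intro x hx
    have hxs : x ∈ s := hsub ⟨hx.1.le, hx.2.le⟩
    have hnbhd : s ∈ nhds x := by
      rw [hsdef]
      apply mem_of_superset (isOpen_Ioo.mem_nhds (show x ∈ Set.Ioo (0:ℝ) (π/2) from ⟨hx.1, lt_of_lt_of_le hx.2 hφ.2.le⟩))
      exact Set.Ioo_subset_Ico_self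
    exact (hvD x hxs).hasDerivAt hnbhd
  have hant : AntitoneOn v (Set.Icc 0 φ) := by
    apply antitoneOn_of_deriv_nonpos (convex_Icc 0 φ) hvcont
    · intro x hx
      rw [interior_Icc] at hx
      exact (hmem x hx).differentiableAt.differentiableWithinAt
    · intro x hx
      rw [interior_Icc] at hx
      rw [(hmem x hx).deriv]
      exact hvle x (hsub ⟨hx.1.le, hx.2.le⟩)
  have hv0 : v φ ≤ v 0 := hant ⟨le_refl 0, hφ.1⟩ ⟨hφ.1, le_refl φ⟩ hφ.1
  have hv0' : v 0 = u 0 := by simp [hvdef]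
  have huφ : u φ ≤ u 0 * Real.exp (K * φ) := by
    have hev : Real.exp (-(K * φ)) = (Real.exp (K * φ))⁻¹ := by rw [Real.exp_neg]
    have hep := Real.exp_pos (K * φ)
    have : u φ * (Real.exp (K * φ))⁻¹ ≤ u 0 := by
      rw [← hev]; rw [hv0'] at hv0; exact hv0
    calc u φ = u φ * (Real.exp (K * φ))⁻¹ * Real.exp (K * φ) := by field_simp
      _ ≤ u 0 * Real.exp (K * φ) := mul_le_mul_of_nonneg_right this hep.le
  have hu0 : u 0 ≤ 1 + M^2 + L * M^2 := by
    have h0s : (0:ℝ) ∈ s := ⟨le_refl 0, hπ⟩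
    have hb1 : (h₁ 0)^2 ≤ M^2 := by
      rw [← sq_abs]; exact pow_le_pow_left₀ (abs_nonneg _) hh10 2
    have hb2 : (h 0)^2 ≤ M^2 := by
      rw [← sq_abs]; exact pow_le_pow_left₀ (abs_nonneg _) hh0 2
    simp only [hudef, hwdef, Real.cos_zero, one_pow, one_mul]
    nlinarith
  have hexpφ : Real.exp (K * φ) ≤ Real.exp (K * (π/2)) := by
    apply Real.exp_le_exp.mpr
    exact mul_le_mul_of_nonneg_left hφ.2.le hK.le
  have huA : u φ ≤ A := by
    calc u φ ≤ u 0 * Real.exp (K * φ) := huφ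
      _ ≤ (1 + M^2 + L * M^2) * Real.exp (K * (π/2)) := by
          apply mul_le_mul hu0 hexpφ (Real.exp_pos _).le (by positivity)
  have hwA : (w φ)^2 ≤ A := by
    have := hunonneg φ hφ
    simp only [hudef] at huA
    nlinarith
  have hwle : |w φ| ≤ Real.sqrt A := by
    rw [← Real.sqrt_sq_eq_abs]
    exact Real.sqrt_le_sqrt hwA
  have hcφ := hcos φ hφ
  have hck : (0:ℝ) < Real.cos φ ^ k := pow_pos hcφ k
  have hrw : Real.cos φ ^ ((2:ℝ) - (n:ℝ)) = (Real.cos φ ^ k)⁻¹ := by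
    rw [show (2:ℝ) - (n:ℝ) = -(k:ℝ) by linarith [hn2], Real.rpow_neg hcφ.le,
      Real.rpow_natCast]
  have hwabs : |w φ| = Real.cos φ ^ k * |h₁ φ| := by
    have : w φ = Real.cos φ ^ k * h₁ φ := rfl
    rw [this, abs_mul, abs_of_pos hck]
  have final : |h₁ φ| * Real.cos φ ^ k ≤ Real.sqrt A := by
    rw [mul_comm, ← hwabs]
    exact hwle
  rw [hrw, ← div_eq_mul_inv, le_div_iff₀ hck]
  exact final
end

section
/- For every integer n ≥ 2 there exist constants c ∈ (0, 1) and C > 0, depending only on n, with the following property: for every μ ≥ 0, every 0 ≤ ζ ≤ δ ≤ c, and every C² function h : [0, π/2) → ℝ satisfying h''(φ) − (n−2)·tan(φ)·h'(φ) + λ_μ·h(φ) = 0 for all φ ∈ [0, π/2) and h(ζ) = 0, one has |h'(φ) − h'(ζ)·cos(√λ_μ · (φ − ζ))| ≤ C·δ²·|h'(ζ)| for all φ ∈ [ζ, δ], where λ_μ := μ(μ+n−2). -/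
open Real Set Filter

set_option maxHeartbeats 1600000 in
/-- **Lemma 5.1, second part.** There are `c ∈ (0,1)` and `C > 0` depending only on `n`
such that any solution of the homogeneous Legendre ODE on `[0, π/2)` vanishing at some
`ζ ≤ δ ≤ c` is `C¹`-approximated near the equator by the plane wave
`h'(ζ)·cos(√λ_μ(φ-ζ))`, with error `C·δ²·|h'(ζ)|`. Here `h₁, h₂` denote the first and
second derivatives of `h`. -/
theorem legendre_ode_plane_wave (n : ℕ) (hn : 2 ≤ n) :
    ∃ c : ℝ, 0 < c ∧ c < 1 ∧ ∃ C : ℝ, 0 < C ∧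
      ∀ μ : ℝ, 0 ≤ μ → ∀ ζ δ : ℝ, 0 ≤ ζ → ζ ≤ δ → δ ≤ c →
      ∀ h h₁ h₂ : ℝ → ℝ,
        (∀ φ ∈ Set.Ico (0 : ℝ) (π / 2), HasDerivWithinAt h (h₁ φ) (Set.Ico 0 (π / 2)) φ) →
        (∀ φ ∈ Set.Ico (0 : ℝ) (π / 2), HasDerivWithinAt h₁ (h₂ φ) (Set.Ico 0 (π / 2)) φ) →
        ContinuousOn h₂ (Set.Ico 0 (π / 2)) →
        (∀ φ ∈ Set.Ico (0 : ℝ) (π / 2),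
          h₂ φ - (n - 2 : ℝ) * Real.tan φ * h₁ φ + μ * (μ + n - 2) * h φ = 0) →
        h ζ = 0 →
        ∀ φ ∈ Set.Icc ζ δ,
          |h₁ φ - h₁ ζ * Real.cos (Real.sqrt (μ * (μ + n - 2)) * (φ - ζ))|
            ≤ C * δ ^ 2 * |h₁ ζ| := by
  refine ⟨1/2, by norm_num, by norm_num, 2 * n * Real.exp n + 1, by positivity, ?_⟩
  intro μ hμ ζ δ hζ0 hζδ hδc h h₁ h₂ hd1 hd2 _ hode hhζ φ hφS
  have hn2 : (0:ℝ) ≤ (n:ℝ) - 2 := by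
    have : (2:ℝ) ≤ (n:ℝ) := by exact_mod_cast hn
    linarith
  set lam : ℝ := μ * (μ + (n:ℝ) - 2) with hlamdef
  have hlam : 0 ≤ lam := mul_nonneg hμ (by linarith)
  set ω : ℝ := Real.sqrt lam with hωdef
  have hω2 : ω ^ 2 = lam := Real.sq_sqrt hlam
  have hδ0 : 0 ≤ δ := le_trans hζ0 hζδ
  have hδhalf : δ ≤ 1/2 := hδc
  have hpi : δ < π / 2 := lt_of_le_of_lt hδhalf (by have := Real.pi_gt_three; linarith)
  have hSsub : Icc ζ δ ⊆ Ico 0 (π/2) := fun x hx =>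
    ⟨le_trans hζ0 hx.1, lt_of_le_of_lt hx.2 hpi⟩
  set S := Icc ζ δ with hSdef
  -- tan bounds on S
  have htan : ∀ x ∈ S, 0 ≤ Real.tan x ∧ Real.tan x ≤ 2 * δ := by
    intro x hx
    have hx0 : 0 ≤ x := le_trans hζ0 hx.1
    have hxδ : x ≤ δ := hx.2
    have hxpi : x < π/2 := lt_of_le_of_lt hxδ hpi
    have hcos : (1:ℝ)/2 ≤ Real.cos x := by
      have h1 := Real.one_sub_sq_div_two_le_cos (x := x)
      nlinarith
    have hsin : Real.sin x ≤ x := Real.sin_le hx0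
    refine ⟨Real.tan_nonneg_of_nonneg_of_le_pi_div_two hx0 hxpi.le, ?_⟩
    rw [Real.tan_eq_sin_div_cos, div_le_iff₀ (by linarith)]
    nlinarith
  -- restricted derivatives and the ODE
  have hd1' : ∀ x ∈ S, HasDerivWithinAt h (h₁ x) S x := fun x hx => (hd1 x (hSsub hx)).mono hSsub
  have hd2' : ∀ x ∈ S, HasDerivWithinAt h₁ (h₂ x) S x := fun x hx => (hd2 x (hSsub hx)).mono hSsub
  have hode' : ∀ x ∈ S, h₂ x = ((n:ℝ) - 2) * Real.tan x * h₁ x - lam * h x := by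
    intro x hx
    have := hode x (hSsub hx)
    linarith
  set a : ℝ := h₁ ζ with hadef
  -- Step A : a priori bound on h₁ via Gronwall for the energy
  set K : ℝ := 2 * ((n:ℝ) - 2) with hKdef
  set E : ℝ → ℝ := fun x => (h₁ x)^2 + lam * (h x)^2 with hEdef
  set E' : ℝ → ℝ := fun x => 2 * ((n:ℝ) - 2) * Real.tan x * (h₁ x)^2 with hE'def
  have hE : ∀ x ∈ S, HasDerivWithinAt E (E' x) S x := by
    intro x hx
    have h1 := (hd2' x hx).pow 2
    have h2 := ((hd1' x hx).pow 2).const_mul lam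
    have h3 := h1.add h2
    refine h3.congr_deriv ?_
    rw [hode' x hx]
    push_cast
    ring
  have hEcont : ContinuousOn E S := fun x hx => (hE x hx).continuousWithinAt
  have hEIci : ∀ x ∈ Ico ζ δ, HasDerivWithinAt E (E' x) (Ici x) x := fun x hx =>
    (hE x (Ico_subset_Icc_self hx)).mono_of_mem_nhdsWithin (Icc_mem_nhdsGE_of_mem hx)
  have hEζ : ‖E ζ‖ ≤ a^2 := by
    have : E ζ = a^2 := by simp [hEdef, hhζ, hadef]
    rw [this, Real.norm_eq_abs, abs_of_nonneg (sq_nonneg a)]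
  have hEbound : ∀ x ∈ Ico ζ δ, ‖E' x‖ ≤ K * ‖E x‖ + 0 := by
    intro x hx
    have hxS : x ∈ S := Ico_subset_Icc_self hx
    obtain ⟨ht0, ht1⟩ := htan x hxS
    have hE0 : 0 ≤ E x := by
      have := mul_nonneg hlam (sq_nonneg (h x))
      have := sq_nonneg (h₁ x)
      simp only [hEdef]
      positivity
    have hE'0 : 0 ≤ E' x := by
      simp only [hE'def]
      have := mul_nonneg (mul_nonneg (by linarith : (0:ℝ) ≤ 2 * ((n:ℝ)-2)) ht0) (sq_nonneg (h₁ x))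
      linarith
    rw [Real.norm_eq_abs, Real.norm_eq_abs, abs_of_nonneg hE'0, abs_of_nonneg hE0, add_zero]
    have htan1 : Real.tan x ≤ 1 := le_trans ht1 (by linarith)
    simp only [hE'def, hEdef, hKdef]
    nlinarith [mul_nonneg (mul_nonneg hn2 (sub_nonneg.2 htan1)) (sq_nonneg (h₁ x)),
      mul_nonneg hlam (sq_nonneg (h x))]
  have hgron := norm_le_gronwallBound_of_norm_deriv_right_le hEcont hEIci hEζ hEbound
  set M : ℝ := |a| * Real.exp n with hMdef
  have hM0 : 0 ≤ M := by positivity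
  have hM : ∀ x ∈ S, |h₁ x| ≤ M := by
    intro x hx
    have hg := hgron x hx
    rw [gronwallBound_ε0, Real.norm_eq_abs] at hg
    have hE0 : 0 ≤ E x := by
      have := mul_nonneg hlam (sq_nonneg (h x))
      have := sq_nonneg (h₁ x)
      simp only [hEdef]
      positivity
    rw [abs_of_nonneg hE0] at hg
    have hexp : Real.exp (K * (x - ζ)) ≤ Real.exp n := by
      apply Real.exp_le_exp.2
      have h1 : ζ ≤ x := hx.1
      have h2 : x ≤ δ := hx.2
      simp only [hKdef]
      nlinarith
    have hsq : (h₁ x)^2 ≤ E x := by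
      have := mul_nonneg hlam (sq_nonneg (h x))
      simp only [hEdef]
      linarith
    have he1 : 1 ≤ Real.exp (n:ℝ) := Real.one_le_exp (by positivity)
    have h1 : (h₁ x)^2 ≤ (|a| * Real.exp n)^2 := by
      have e3 : (|a| * Real.exp n)^2 = a^2 * Real.exp (n:ℝ) * Real.exp (n:ℝ) := by
        rw [mul_pow, sq_abs]; ring
      nlinarith [mul_le_mul_of_nonneg_left hexp (sq_nonneg a),
        mul_nonneg (mul_nonneg (sq_nonneg a) (Real.exp_pos (n:ℝ)).le) (sub_nonneg.2 he1)]
    calc |h₁ x| = Real.sqrt ((h₁ x)^2) := (Real.sqrt_sq_eq_abs _).symm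
      _ ≤ Real.sqrt ((|a| * Real.exp n)^2) := Real.sqrt_le_sqrt h1
      _ = |a| * Real.exp n := Real.sqrt_sq (by positivity)
  -- Step B : comparison with the plane wave
  set f0 : ℝ → ℝ := fun x => ((n:ℝ) - 2) * Real.tan x * h₁ x with hf0
  set u : ℝ → ℝ := fun x => h₁ x - a * Real.cos (ω * (x - ζ)) with hu
  set v : ℝ → ℝ := fun x => ω * h x - a * Real.sin (ω * (x - ζ)) with hv
  have hlin : ∀ x : ℝ, HasDerivAt (fun y => ω * (y - ζ)) ω x := by
    intro x
    simpa using ((hasDerivAt_id x).sub_const ζ).const_mul ω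
  have hucos : ∀ x : ℝ, HasDerivAt (fun y => a * Real.cos (ω * (y - ζ)))
      (-(a * ω * Real.sin (ω * (x - ζ)))) x := by
    intro x
    have := ((hlin x).cos).const_mul a
    refine this.congr_deriv ?_
    ring
  have husin : ∀ x : ℝ, HasDerivAt (fun y => a * Real.sin (ω * (y - ζ)))
      (a * ω * Real.cos (ω * (x - ζ))) x := by
    intro x
    have := ((hlin x).sin).const_mul a
    refine this.congr_deriv ?_
    ring
  have hud : ∀ x ∈ S, HasDerivWithinAt u (f0 x - ω * v x) S x := by
    intro x hx
    have := (hd2' x hx).sub ((hucos x).hasDerivWithinAt)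
    refine this.congr_deriv ?_
    rw [hode' x hx, ← hω2]
    simp only [hf0, hv]
    ring
  have hvd : ∀ x ∈ S, HasDerivWithinAt v (ω * u x) S x := by
    intro x hx
    have := ((hd1' x hx).const_mul ω).sub ((husin x).hasDerivWithinAt)
    refine this.congr_deriv ?_
    simp only [hu]
    ring
  set N : ℝ → ℝ := fun x => (u x)^2 + (v x)^2 with hN
  have hNd : ∀ x ∈ S, HasDerivWithinAt N (2 * u x * f0 x) S x := by
    intro x hx
    have := ((hud x hx).pow 2).add ((hvd x hx).pow 2)
    refine this.congr_deriv ?_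
    push_cast
    ring
  set L : ℝ := ((n:ℝ) - 2) * (2 * δ) * M with hLdef
  have hL0 : 0 ≤ L := by
    have := mul_nonneg (mul_nonneg hn2 (by linarith : (0:ℝ) ≤ 2 * δ)) hM0
    simpa [hLdef] using this
  have key : ∀ ε : ℝ, 0 < ε → |u φ| ≤ L * δ + ε := by
    intro ε hε
    set s : ℝ → ℝ := fun x => Real.sqrt (N x + ε^2) with hs
    set s' : ℝ → ℝ := fun x => (2 * u x * f0 x) / (2 * Real.sqrt (N x + ε^2)) with hs'
    have hNnn : ∀ x, 0 ≤ N x := by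
      intro x
      have := sq_nonneg (u x)
      have := sq_nonneg (v x)
      simp only [hN]
      positivity
    have hNε : ∀ x, 0 < N x + ε^2 := fun x => by
      have := hNnn x
      positivity
    have hsd : ∀ x ∈ S, HasDerivWithinAt s (s' x) S x := by
      intro x hx
      exact ((hNd x hx).add_const (ε^2)).sqrt (ne_of_gt (hNε x))
    have hbound : ∀ x ∈ Ico ζ δ, ‖s' x‖ ≤ L := by
      intro x hx
      have hxS : x ∈ S := Ico_subset_Icc_self hx
      obtain ⟨ht0, ht1⟩ := htan x hxS
      have hM1 := hM x hxS
      have hroot : 0 < Real.sqrt (N x + ε^2) := Real.sqrt_pos.2 (hNε x)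
      have husqrt : |u x| ≤ Real.sqrt (N x + ε^2) := by
        rw [← Real.sqrt_sq_eq_abs]
        apply Real.sqrt_le_sqrt
        have := sq_nonneg (v x)
        simp only [hN]
        nlinarith [sq_nonneg ε]
      have h1 : |s' x| ≤ |f0 x| := by
        have e1 : |s' x| = 2 * |u x| * |f0 x| / (2 * Real.sqrt (N x + ε^2)) := by
          simp only [hs', abs_div, abs_mul, abs_two, abs_of_pos hroot]
        rw [e1, div_le_iff₀ (by positivity)]
        nlinarith [mul_nonneg (abs_nonneg (f0 x)) (sub_nonneg.2 husqrt), abs_nonneg (u x),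
          abs_nonneg (f0 x)]
      have h2 : |f0 x| ≤ L := by
        have e2 : |f0 x| = ((n:ℝ) - 2) * Real.tan x * |h₁ x| := by
          simp only [hf0, abs_mul, abs_of_nonneg hn2, abs_of_nonneg ht0]
        rw [e2, hLdef]
        nlinarith [mul_le_mul_of_nonneg_left hM1 (mul_nonneg hn2 ht0),
          mul_nonneg (mul_nonneg hn2 hM0) (sub_nonneg.2 ht1)]
      rw [Real.norm_eq_abs]
      linarith
    have hmvt := norm_image_sub_le_of_norm_deriv_le_segment' hsd hbound φ hφS
    rw [Real.norm_eq_abs] at hmvt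
    have hsζ : s ζ = ε := by
      have hu0 : u ζ = 0 := by simp [hu, hadef]
      have hv0 : v ζ = 0 := by simp [hv, hhζ]
      have hNζ : N ζ + ε^2 = ε^2 := by simp [hN, hu0, hv0]
      show Real.sqrt (N ζ + ε^2) = ε
      rw [hNζ, Real.sqrt_sq hε.le]
    have hsφ : s φ ≤ ε + L * δ := by
      have h1 : s φ - s ζ ≤ |s φ - s ζ| := le_abs_self _
      have h2 : L * (φ - ζ) ≤ L * δ := by
        apply mul_le_mul_of_nonneg_left _ hL0
        have := hφS.2
        linarith
      linarith
    have huφ : |u φ| ≤ s φ := by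
      rw [← Real.sqrt_sq_eq_abs]
      apply Real.sqrt_le_sqrt
      have := sq_nonneg (v φ)
      have := sq_nonneg ε
      show (u φ)^2 ≤ N φ + ε^2
      simp only [hN]
      nlinarith
    linarith
  have hfin : |u φ| ≤ L * δ := le_of_forall_pos_le_add key
  have hfinal : L * δ ≤ (2 * n * Real.exp n + 1) * δ^2 * |a| := by
    rw [hLdef, hMdef]
    have hn' : ((n:ℝ) - 2) ≤ (n:ℝ) := by linarith
    nlinarith [mul_nonneg (mul_nonneg (sq_nonneg δ) (abs_nonneg a)) (Real.exp_pos (n:ℝ)).le,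
      mul_nonneg (sq_nonneg δ) (abs_nonneg a), Real.exp_pos (n:ℝ)]
  calc |h₁ φ - a * Real.cos (ω * (φ - ζ))| = |u φ| := rfl
    _ ≤ L * δ := hfin
    _ ≤ (2 * n * Real.exp n + 1) * δ^2 * |a| := hfinal
end

section
/- Let n ≥ 2 be an integer, μ ≥ 0, λ_μ := μ(μ+n−2), and let p be a Legendre function for the pair (n, μ). Let q : [0, π/2] → ℝ be C¹ on [0, π/2], C² on [0, π/2), satisfying q''(φ) − (n−2)·tan(φ)·q'(φ) + λ_μ·q(φ) = −(2μ+n−2)·p(φ) for all φ ∈ [0, π/2), with q(π/2) = 0 and q'(π/2) = 0. Then for every ζ ∈ (0, π/2) with p(ζ) = 0 one has −cos(ζ)^{n−2}·p'(ζ)·q(ζ) = (2μ+n−2)·∫_ζ^{π/2} p(φ)²·cos(φ)^{n−2} dφ. -/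
open Real Set Filter

private lemma tan_pow_aux (m : ℕ) (x : ℝ) (hx : Real.cos x ≠ 0) :
    (m : ℝ) * Real.cos x ^ m * Real.tan x = (m : ℝ) * Real.sin x * Real.cos x ^ (m - 1) := by
  cases m with
  | zero => simp
  | succ k =>
    rw [Real.tan_eq_sin_div_cos, pow_succ, Nat.add_sub_cancel]
    field_simp

/-- **Green identity (4).** If `q` solves `L_μ q = -(2μ+n-2)·p` with `q(π/2) = q'(π/2) = 0`,
where `p` is a Legendre function for `(n, μ)`, then at every zero `ζ ∈ (0, π/2)` of `p`,
`-cos(ζ)^{n-2}·p'(ζ)·q(ζ) = (2μ+n-2)·∫_ζ^{π/2} p(φ)²·cos(φ)^{n-2} dφ`.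
Here `p₁, q₁, q₂` denote derivatives. -/
theorem legendre_green_identity (n : ℕ) (hn : 2 ≤ n) (μ : ℝ) (hμ : 0 ≤ μ)
    (p p₁ : ℝ → ℝ) (hp : IsLegendre n μ p p₁)
    (q q₁ q₂ : ℝ → ℝ)
    (hq1 : ∀ φ ∈ Set.Icc (0 : ℝ) (π / 2), HasDerivWithinAt q (q₁ φ) (Set.Icc 0 (π / 2)) φ)
    (hq1c : ContinuousOn q₁ (Set.Icc 0 (π / 2)))
    (hq2 : ∀ φ ∈ Set.Ico (0 : ℝ) (π / 2), HasDerivWithinAt q₁ (q₂ φ) (Set.Ico 0 (π / 2)) φ)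
    (hq2c : ContinuousOn q₂ (Set.Ico 0 (π / 2)))
    (hode : ∀ φ ∈ Set.Ico (0 : ℝ) (π / 2),
      q₂ φ - (n - 2 : ℝ) * Real.tan φ * q₁ φ + μ * (μ + n - 2) * q φ
        = -(2 * μ + n - 2) * p φ)
    (hq0 : q (π / 2) = 0) (hq10 : q₁ (π / 2) = 0) :
    ∀ ζ ∈ Set.Ioo (0 : ℝ) (π / 2), p ζ = 0 →
      -(Real.cos ζ ^ (n - 2)) * p₁ ζ * q ζ
        = (2 * μ + n - 2) * ∫ φ in ζ..(π / 2), p φ ^ 2 * Real.cos φ ^ (n - 2) := by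
  obtain ⟨hp1, hp1c, ⟨p₂, hp2, hp2c, hpode⟩, hpπ, hp1π⟩ := hp
  intro ζ hζ hpζ
  have hζle : ζ ≤ π / 2 := hζ.2.le
  set m : ℕ := n - 2 with hm
  have hmn : ((m : ℝ)) = (n : ℝ) - 2 := by
    rw [hm]; push_cast [Nat.cast_sub hn]; ring
  set c : ℝ := 2 * μ + n - 2 with hc
  set W : ℝ → ℝ := fun φ => Real.cos φ ^ m * (p₁ φ * q φ - p φ * q₁ φ) with hWdef
  -- continuity of p and q on Icc 0 (π/2)
  have hpc : ContinuousOn p (Set.Icc 0 (π / 2)) :=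
    fun x hx => (hp1 x hx).continuousWithinAt
  have hqc : ContinuousOn q (Set.Icc 0 (π / 2)) :=
    fun x hx => (hq1 x hx).continuousWithinAt
  have hWc : ContinuousOn W (Set.Icc ζ (π / 2)) := by
    have hsub : Set.Icc ζ (π / 2) ⊆ Set.Icc 0 (π / 2) :=
      Set.Icc_subset_Icc hζ.1.le le_rfl
    exact (((Real.continuous_cos.continuousOn).pow m).mul
      ((((hp1c.mono hsub).mul (hqc.mono hsub))).sub
        ((hpc.mono hsub).mul (hq1c.mono hsub)))).congr (fun x _ => rfl)
  -- the derivative of W on the open interval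
  have key : ∀ x ∈ Set.Ioo ζ (π / 2),
      HasDerivAt W (c * (p x ^ 2 * Real.cos x ^ m)) x := by
    intro x hx
    have hx0 : 0 < x := lt_trans hζ.1 hx.1
    have hxIoo : x ∈ Set.Ioo (0 : ℝ) (π / 2) := ⟨hx0, hx.2⟩
    have hxIcc : x ∈ Set.Icc (0 : ℝ) (π / 2) := ⟨hx0.le, hx.2.le⟩
    have hxIco : x ∈ Set.Ico (0 : ℝ) (π / 2) := ⟨hx0.le, hx.2⟩
    have hnIcc : Set.Icc (0 : ℝ) (π / 2) ∈ nhds x := Icc_mem_nhds hx0 hx.2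
    have hnIco : Set.Ico (0 : ℝ) (π / 2) ∈ nhds x := Ico_mem_nhds hx0 hx.2
    have hdp : HasDerivAt p (p₁ x) x := (hp1 x hxIcc).hasDerivAt hnIcc
    have hdq : HasDerivAt q (q₁ x) x := (hq1 x hxIcc).hasDerivAt hnIcc
    have hdp1 : HasDerivAt p₁ (p₂ x) x := (hp2 x hxIco).hasDerivAt hnIco
    have hdq1 : HasDerivAt q₁ (q₂ x) x := (hq2 x hxIco).hasDerivAt hnIco
    have hcosx : Real.cos x ≠ 0 := by
      have := Real.cos_pos_of_mem_Ioo ⟨by linarith [hx0, Real.pi_pos], hx.2⟩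
      exact ne_of_gt this
    have h1 : HasDerivAt (fun y => Real.cos y ^ m)
        ((m : ℝ) * Real.cos x ^ (m - 1) * (-Real.sin x)) x :=
      (Real.hasDerivAt_cos x).pow m
    have h2 : HasDerivAt (fun y => p₁ y * q y - p y * q₁ y)
        (p₂ x * q x + p₁ x * q₁ x - (p₁ x * q₁ x + p x * q₂ x)) x :=
      (hdp1.mul hdq).sub (hdp.mul hdq1)
    have hW' := h1.mul h2
    have hpx := hpode x hxIco
    have hqx := hode x hxIco
    have hp2x : p₂ x = (n - 2 : ℝ) * Real.tan x * p₁ x - μ * (μ + n - 2) * p x := by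
      linarith
    have htan := tan_pow_aux m x hcosx
    rw [hmn] at htan
    have hq2x' : q₂ x = (n - 2 : ℝ) * Real.tan x * q₁ x - μ * (μ + n - 2) * q x
        - c * p x := by linarith [hqx]
    refine hW'.congr_deriv (Eq.symm ?_)
    rw [hp2x, hq2x', hmn]
    linear_combination (p x * q₁ x - p₁ x * q x) * htan
  -- integrability
  have hintg : IntervalIntegrable (fun x => c * (p x ^ 2 * Real.cos x ^ m))
      MeasureTheory.volume ζ (π / 2) := by
    apply ContinuousOn.intervalIntegrable
    rw [Set.uIcc_of_le hζle]
    have hsub : Set.Icc ζ (π / 2) ⊆ Set.Icc 0 (π / 2) :=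
      Set.Icc_subset_Icc hζ.1.le le_rfl
    exact continuousOn_const.mul
      (((hpc.mono hsub).pow 2).mul ((Real.continuous_cos.continuousOn).pow m))
  have hFTC := intervalIntegral.integral_eq_sub_of_hasDerivAt_of_le hζle hWc key hintg
  have hWπ : W (π / 2) = 0 := by
    simp [hWdef, hq0, hq10]
  have hWζ : W ζ = Real.cos ζ ^ m * (p₁ ζ * q ζ) := by
    simp [hWdef, hpζ]
  rw [hWπ, hWζ] at hFTC
  rw [intervalIntegral.integral_const_mul] at hFTC
  have : (2 * μ + ↑n - 2) * ∫ φ in ζ..(π / 2), p φ ^ 2 * Real.cos φ ^ (n - 2)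
      = c * ∫ x in ζ..(π / 2), p x ^ 2 * Real.cos x ^ m := by rw [hc, hm]
  rw [this, hFTC]
  ring
end

section
/- For every integer n ≥ 2 there exists a constant C > 0, depending only on n, with the following property: for every μ > 0, setting λ_μ := μ(μ+n−2), every Legendre function p for the pair (n, μ), and every φ₀ ∈ (0, π/2) with p(φ₀) = 0, one has ∫_{φ₀}^{π/2} (p'(φ)² + λ_μ·p(φ)²)·cos(φ)^{n−2} dφ ≤ (C/φ₀)·p'(φ₀)². -/
open Real Set Filter

/-- **Energy estimate (5.10).** For every `n ≥ 2` there is `C > 0` depending only on `n`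
such that for every `μ > 0`, every Legendre function `p` for `(n, μ)` and every zero
`φ₀ ∈ (0, π/2)` of `p`, the weighted energy of `p` on the cap `[φ₀, π/2]` is controlled:
`∫_{φ₀}^{π/2} (p'² + λ_μ p²)·cos^{n-2} ≤ (C/φ₀)·p'(φ₀)²`. -/
theorem legendre_energy_bound (n : ℕ) (hn : 2 ≤ n) :
    ∃ C : ℝ, 0 < C ∧ ∀ μ : ℝ, 0 < μ → ∀ p p₁ : ℝ → ℝ, IsLegendre n μ p p₁ →
      ∀ φ₀ ∈ Set.Ioo (0 : ℝ) (π / 2), p φ₀ = 0 →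
        (∫ φ in φ₀..(π / 2),
            (p₁ φ ^ 2 + μ * (μ + n - 2) * p φ ^ 2) * Real.cos φ ^ (n - 2))
          ≤ C / φ₀ * p₁ φ₀ ^ 2 := by
  refine ⟨π / 2, by positivity, ?_⟩
  intro μ hμ p p₁ hL φ₀ hφ₀ hp0
  obtain ⟨hp, hp₁cont, ⟨p₂, hp₁d, hp₂cont, hODE⟩, hpπ, hp₁π⟩ := hL
  obtain ⟨hφ₀0, hφ₀π⟩ := hφ₀
  have hπ : (0:ℝ) < π := Real.pi_pos
  set l : ℝ := μ * (μ + n - 2) with hl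
  have hn2 : (2:ℝ) ≤ (n:ℝ) := by exact_mod_cast hn
  have hl0 : 0 ≤ l := by nlinarith
  set m : ℕ := n - 2 with hm
  have hmcast : (m : ℝ) = (n : ℝ) - 2 := by
    rw [hm, Nat.cast_sub hn]; norm_num
  set F : ℝ → ℝ := fun φ => p₁ φ ^ 2 + l * p φ ^ 2 with hF
  set N : ℝ → ℝ := fun φ => Real.cos φ * (Real.sin φ)⁻¹ * (Real.cos φ ^ m * F φ)
      - ((n:ℝ) - 2) * (Real.cos φ ^ m * (p φ * p₁ φ)) with hN
  set g : ℝ → ℝ := fun φ => -((Real.sin φ) ^ 2)⁻¹ * (Real.cos φ ^ m * F φ) with hg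
  have hle : φ₀ ≤ π / 2 := hφ₀π.le
  have hsub : Icc φ₀ (π/2) ⊆ Icc 0 (π/2) := Icc_subset_Icc hφ₀0.le le_rfl
  have hpc : ContinuousOn p (Icc 0 (π/2)) := fun x hx => (hp x hx).continuousWithinAt
  have hsinpos : ∀ x ∈ Icc φ₀ (π/2), 0 < Real.sin x := by
    intro x hx
    exact Real.sin_pos_of_pos_of_lt_pi (hφ₀0.trans_le hx.1) (lt_of_le_of_lt hx.2 (by linarith))
  have hFc : ContinuousOn F (Icc 0 (π/2)) :=
    (hp₁cont.pow 2).add (continuousOn_const.mul (hpc.pow 2))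
  have hgc : ContinuousOn g (Icc φ₀ (π/2)) := by
    refine ContinuousOn.mul (ContinuousOn.neg (ContinuousOn.inv₀
      ((Real.continuous_sin.continuousOn.pow 2)) (fun x hx => pow_ne_zero _ (hsinpos x hx).ne')))
      (ContinuousOn.mul (Real.continuous_cos.continuousOn.pow m) (hFc.mono hsub))
  have hNc : ContinuousOn N (Icc φ₀ (π/2)) := by
    refine ContinuousOn.sub (ContinuousOn.mul (ContinuousOn.mul
        Real.continuous_cos.continuousOn
        (ContinuousOn.inv₀ Real.continuous_sin.continuousOn (fun x hx => (hsinpos x hx).ne')))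
        (ContinuousOn.mul (Real.continuous_cos.continuousOn.pow m) (hFc.mono hsub)))
      (continuousOn_const.mul (ContinuousOn.mul (Real.continuous_cos.continuousOn.pow m)
        ((hpc.mono hsub).mul (hp₁cont.mono hsub))))
  -- derivative of N
  have hder : ∀ x ∈ Ioo φ₀ (π/2), HasDerivAt N (g x) x := by
    intro x hx
    have hx0 : 0 < x := hφ₀0.trans hx.1
    have hxπ : x < π / 2 := hx.2
    have hs : 0 < Real.sin x := Real.sin_pos_of_pos_of_lt_pi hx0 (by linarith)
    have hc : 0 < Real.cos x := Real.cos_pos_of_mem_Ioo ⟨by linarith, hxπ⟩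
    have hpd : HasDerivAt p (p₁ x) x :=
      (hp x ⟨hx0.le, hxπ.le⟩).hasDerivAt (Icc_mem_nhds hx0 hxπ)
    have hp1d : HasDerivAt p₁ (p₂ x) x :=
      (hp₁d x ⟨hx0.le, hxπ⟩).hasDerivAt (Ico_mem_nhds hx0 hxπ)
    have hode : p₂ x = ((n:ℝ) - 2) * (Real.sin x / Real.cos x) * p₁ x - l * p x := by
      have h := hODE x ⟨hx0.le, hxπ⟩
      rw [Real.tan_eq_sin_div_cos] at h
      linarith
    have hcos := Real.hasDerivAt_cos x
    have hsin := Real.hasDerivAt_sin x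
    have hsinv : HasDerivAt (fun y => (Real.sin y)⁻¹) (-(Real.cos x) / Real.sin x ^ 2) x :=
      hsin.inv hs.ne'
    have hw : HasDerivAt (fun y => Real.cos y ^ m)
        (-((m:ℝ) * (Real.sin x / Real.cos x) * Real.cos x ^ m)) x := by
      have h0 := hcos.pow m
      refine h0.congr_deriv ?_
      symm
      rcases Nat.eq_zero_or_pos m with h | h
      · simp [h]
      · obtain ⟨k, hk⟩ := Nat.exists_eq_succ_of_ne_zero h.ne'
        rw [hk]
        simp only [Nat.succ_sub_one]
        field_simp
        rw [pow_succ]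
        ring
    have hFd : HasDerivAt F (2 * p₁ x ^ 1 * p₂ x + l * (2 * p x ^ 1 * p₁ x)) x :=
      (hp1d.pow 2).add ((hpd.pow 2).const_mul l)
    have hNd := ((hcos.mul hsinv).mul (hw.mul hFd)).sub
      ((hw.mul (hpd.mul hp1d)).const_mul ((n:ℝ) - 2))
    have hD :
        (-Real.sin x * (Real.sin x)⁻¹ + Real.cos x * (-(Real.cos x) / Real.sin x ^ 2)) *
            (Real.cos x ^ m * F x)
          + Real.cos x * (Real.sin x)⁻¹ *
            (-((m:ℝ) * (Real.sin x / Real.cos x) * Real.cos x ^ m) * F x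
              + Real.cos x ^ m * (2 * p₁ x ^ 1 * p₂ x + l * (2 * p x ^ 1 * p₁ x)))
          - ((n:ℝ) - 2) *
            (-((m:ℝ) * (Real.sin x / Real.cos x) * Real.cos x ^ m) * (p x * p₁ x)
              + Real.cos x ^ m * (p₁ x * p₁ x + p x * p₂ x)) = g x := by
      simp only [hg, hF, hode, hmcast]
      have hpy : Real.sin x ^ 2 + Real.cos x ^ 2 = 1 := Real.sin_sq_add_cos_sq x
      field_simp
      linear_combination
        (-(Real.cos x * (p₁ x ^ 2 + l * p x ^ 2))) * hpy
    rw [← hD]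
    exact hNd
  -- FTC
  have hgint : IntervalIntegrable g MeasureTheory.volume φ₀ (π/2) :=
    hgc.intervalIntegrable_of_Icc hle
  have hFTC : ∫ y in φ₀..(π/2), g y = N (π/2) - N φ₀ :=
    intervalIntegral.integral_eq_sub_of_hasDeriv_right_of_le hle hNc
      (fun x hx => (hder x hx).hasDerivWithinAt) hgint
  have hNπ : N (π/2) = 0 := by
    simp [hN, Real.cos_pi_div_two, hp₁π]
  have hNφ₀ : N φ₀ = Real.cos φ₀ * (Real.sin φ₀)⁻¹ * (Real.cos φ₀ ^ m * p₁ φ₀ ^ 2) := by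
    simp [hN, hF, hp0]
  -- comparison of integrands
  have hint1 : IntervalIntegrable
      (fun φ => (p₁ φ ^ 2 + l * p φ ^ 2) * Real.cos φ ^ m) MeasureTheory.volume φ₀ (π/2) :=
    (((hFc.mono hsub)).mul (Real.continuous_cos.continuousOn.pow m)).intervalIntegrable_of_Icc hle
  have hcomp : ∀ x ∈ Icc φ₀ (π/2),
      (p₁ x ^ 2 + l * p x ^ 2) * Real.cos x ^ m ≤ -g x := by
    intro x hx
    have hs := hsinpos x hx
    have hcx : 0 ≤ Real.cos x := Real.cos_nonneg_of_mem_Icc ⟨by linarith [(hsub hx).1], hx.2⟩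
    have hwF : 0 ≤ Real.cos x ^ m * F x := by
      have : 0 ≤ F x := by positivity
      positivity
    have hs1 : Real.sin x ^ 2 ≤ 1 := by
      nlinarith [Real.sin_le_one x]
    have hinv : 1 ≤ ((Real.sin x) ^ 2)⁻¹ := by
      rw [le_inv_comm₀ (by norm_num) (by positivity)]
      simpa using hs1
    have : -g x = ((Real.sin x) ^ 2)⁻¹ * (Real.cos x ^ m * F x) := by rw [hg]; ring
    rw [this]
    calc (p₁ x ^ 2 + l * p x ^ 2) * Real.cos x ^ m
        = 1 * (Real.cos x ^ m * F x) := by rw [hF]; ring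
      _ ≤ ((Real.sin x) ^ 2)⁻¹ * (Real.cos x ^ m * F x) :=
          mul_le_mul_of_nonneg_right hinv hwF
  have hmono : (∫ φ in φ₀..(π/2), (p₁ φ ^ 2 + l * p φ ^ 2) * Real.cos φ ^ m)
      ≤ ∫ φ in φ₀..(π/2), -g φ :=
    intervalIntegral.integral_mono_on hle hint1 hgint.neg hcomp
  have hval : (∫ φ in φ₀..(π/2), -g φ) = N φ₀ := by
    rw [intervalIntegral.integral_neg, hFTC, hNπ]; ring
  -- final bound
  have hsφ₀ : 0 < Real.sin φ₀ := Real.sin_pos_of_pos_of_lt_pi hφ₀0 (by linarith)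
  have hsin_lb : 2 / π * φ₀ ≤ Real.sin φ₀ := Real.mul_le_sin hφ₀0.le hle
  have hinvb : (Real.sin φ₀)⁻¹ ≤ π / 2 / φ₀ := by
    have h2 : (0:ℝ) < 2 / π * φ₀ := by positivity
    have := inv_anti₀ h2 hsin_lb
    calc (Real.sin φ₀)⁻¹ ≤ (2 / π * φ₀)⁻¹ := this
      _ = π / 2 / φ₀ := by field_simp
  have hcφ₀ : 0 ≤ Real.cos φ₀ := Real.cos_nonneg_of_mem_Icc ⟨by linarith, hle⟩
  have hfinal : N φ₀ ≤ π / 2 / φ₀ * p₁ φ₀ ^ 2 := by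
    rw [hNφ₀]
    have h1 : Real.cos φ₀ ≤ 1 := Real.cos_le_one φ₀
    have h2 : Real.cos φ₀ ^ m ≤ 1 := pow_le_one₀ hcφ₀ h1
    have h3 : (0:ℝ) < π / 2 / φ₀ := div_pos (by positivity) hφ₀0
    have h4 : (0:ℝ) ≤ (Real.sin φ₀)⁻¹ := by positivity
    have hA : Real.cos φ₀ * (Real.sin φ₀)⁻¹ ≤ π / 2 / φ₀ := by
      have := mul_le_mul h1 hinvb h4 zero_le_one
      simpa using this
    have hB : Real.cos φ₀ ^ m * p₁ φ₀ ^ 2 ≤ p₁ φ₀ ^ 2 := by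
      have := mul_le_mul_of_nonneg_right h2 (sq_nonneg (p₁ φ₀))
      simpa using this
    exact mul_le_mul hA hB (by positivity) h3.le
  calc (∫ φ in φ₀..(π/2), (p₁ φ ^ 2 + l * p φ ^ 2) * Real.cos φ ^ m)
      ≤ ∫ φ in φ₀..(π/2), -g φ := hmono
    _ = N φ₀ := hval
    _ ≤ π / 2 / φ₀ * p₁ φ₀ ^ 2 := hfinal
end
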